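/- arXiv:1405.6138 — 10 statements merged into one kernel-verified Lean document; each statement's English description precedes it below -/
import Mathlib

section
/- Let G be a finite simple graph and let τ and τ' be threshold assignments to the vertices of G that agree on every vertex except exactly one vertex v. If τ(v) > τ'(v), then dyn_τ(G) − 1 ≤ dyn_{τ'}(G) ≤ dyn_τ(G); and if τ(v) < τ'(v), then dyn_τ(G) ≤ dyn_{τ'}(G) ≤ dyn_τ(G) + 1. -/
open Finset

open scoped Classical

variable {V : Type*}

/-- `D` is a `τ`-dynamic monopoly of `G`: the vertex set can be partitioned into
`D₀, D₁, …, D_k` with `D₀ = D` such that for `1 ≤ i ≤ k`, the set `D_i` consists of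
all vertices `v` having at least `τ v` neighbors in `D₀ ∪ … ∪ D_{i-1}`. -/
def IsDynamo [Fintype V] (G : SimpleGraph V) (τ : V → ℕ) (D : Finset V) : Prop :=
  ∃ (k : ℕ) (f : ℕ → Finset V),
    f 0 = D ∧
    (∀ v : V, ∃! i, i ≤ k ∧ v ∈ f i) ∧
    ∀ i, 1 ≤ i → i ≤ k → ∀ v : V,
      v ∈ f i ↔ v ∉ (Finset.range i).biUnion f ∧
        τ v ≤ (((Finset.range i).biUnion f).filter (G.Adj v)).card

/-- `dyn_τ(G)`: the smallest size of a `τ`-dynamic monopoly of `G`. -/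
noncomputable def dynMin [Fintype V] (G : SimpleGraph V) (τ : V → ℕ) : ℕ :=
  sInf {n | ∃ D : Finset V, IsDynamo G τ D ∧ D.card = n}

/-- `Ldyn_t(G)`: the largest value of `dyn_τ(G)` over threshold assignments with
average threshold at most `t`. -/
noncomputable def Ldyn [Fintype V] (G : SimpleGraph V) (t : ℝ) : ℕ :=
  sSup {n | ∃ τ : V → ℕ, (∑ v, (τ v : ℝ)) ≤ t * (Fintype.card V) ∧ dynMin G τ = n}

noncomputable def stepFn [Fintype V] (G : SimpleGraph V) (τ : V → ℕ) (S : Finset V) : Finset V :=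
  S ∪ univ.filter (fun v => τ v ≤ (S.filter (G.Adj v)).card)

lemma key [Fintype V] (G : SimpleGraph V) {τ τ' : V → ℕ} {D E : Finset V}
    (hDE : D ⊆ E) (hτ : ∀ u, u ∉ E → τ' u ≤ τ u) (hD : IsDynamo G τ D) :
    IsDynamo G τ' E := by
  obtain ⟨k, f, hf0, huniq, hstep⟩ := hD
  set A : ℕ → Finset V := fun n => (stepFn G τ')^[n] E with hA
  have hA0 : A 0 = E := rfl
  have hAsucc : ∀ n, A (n + 1) = stepFn G τ' (A n) := fun n =>
    Function.iterate_succ_apply' _ _ _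
  have hAmono1 : ∀ n, A n ⊆ A (n + 1) := by
    intro n; rw [hAsucc]; exact subset_union_left
  have hAmono : ∀ {i j : ℕ}, i ≤ j → A i ⊆ A j := by
    intro i j hij
    induction j with
    | zero => simp_all
    | succ j ih =>
      rcases Nat.lt_or_ge i (j+1) with h1 | h1
      · exact (ih (by omega)).trans (hAmono1 j)
      · have : i = j + 1 := by omega
        subst this; exact subset_rfl
  set g : ℕ → Finset V := fun n => match n with
    | 0 => E
    | n + 1 => A (n + 1) \ A n with hg
  have hgsub : ∀ n, g n ⊆ A n := by
    intro n; match n with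
    | 0 => exact subset_rfl
    | n + 1 => exact sdiff_subset
  have hB : ∀ i, (range (i + 1)).biUnion g = A i := by
    intro i
    induction i with
    | zero => simp [hg, hA0]
    | succ i ih =>
      rw [Finset.range_add_one, Finset.biUnion_insert, ih]
      have : g (i + 1) = A (i + 1) \ A i := rfl
      rw [this, Finset.sdiff_union_self_eq_union, Finset.union_eq_left.mpr (hAmono1 i)]
  -- coverage
  have hF : ∀ i, i ≤ k → (range (i + 1)).biUnion f ⊆ A i := by
    intro i
    induction i with
    | zero =>
      intro _; simpa [hf0, hA0] using hDE
    | succ i ih =>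
      intro hik
      have ih' := ih (by omega)
      rw [Finset.range_add_one, Finset.biUnion_insert]
      apply Finset.union_subset _ (ih'.trans (hAmono1 i))
      intro u hu
      rcases Classical.em (u ∈ E) with hE | hE
      · exact hAmono (Nat.zero_le _) hE
      · have hs := (hstep (i + 1) (by omega) hik u).mp hu
        have h1 : τ' u ≤ (((range (i + 1)).biUnion f).filter (G.Adj u)).card :=
          le_trans (hτ u hE) hs.2
        have h2 : τ' u ≤ ((A i).filter (G.Adj u)).card :=
          le_trans h1 (Finset.card_le_card (Finset.filter_subset_filter _ ih'))
        rw [hAsucc, stepFn]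
        exact Finset.mem_union_right _ (Finset.mem_filter.mpr ⟨mem_univ u, h2⟩)
  have hcov : ∀ w : V, w ∈ A k := by
    intro w
    obtain ⟨i, ⟨hik, hwi⟩, _⟩ := huniq w
    exact hF k le_rfl (Finset.mem_biUnion.mpr ⟨i, Finset.mem_range.mpr (by omega), hwi⟩)
  refine ⟨k, g, rfl, ?_, ?_⟩
  · intro w
    have hw : w ∈ A k := hcov w
    have hex : ∃ n, w ∈ A n := ⟨k, hw⟩
    set i := Nat.find hex with hi
    have hik : i ≤ k := Nat.find_min' hex hw
    have hwi : w ∈ g i := by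
      have hwA : w ∈ A i := Nat.find_spec hex
      match hm : i with
      | 0 => exact hwA
      | n + 1 =>
        have : w ∉ A n := Nat.find_min hex (by omega)
        exact Finset.mem_sdiff.mpr ⟨hwA, this⟩
    refine ⟨i, ⟨hik, hwi⟩, ?_⟩
    rintro j ⟨hjk, hwj⟩
    by_contra hne
    rcases Nat.lt_or_ge j i with hji | hji
    · -- w ∈ g j ⊆ A j, contradicts minimality of i
      have : w ∈ A j := hgsub j hwj
      exact absurd this (Nat.find_min hex hji)
    · have hji' : i < j := by omega
      match hm : j, hji' with
      | n + 1, hji' =>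
        have h1 : w ∈ A n := hAmono (by omega) (hgsub i hwi)
        have : w ∉ A n := (Finset.mem_sdiff.mp hwj).2
        exact this h1
  · intro i h1 hik w
    match i, h1 with
    | j + 1, _ =>
      rw [hB j]
      constructor
      · intro hw
        obtain ⟨hwA, hwn⟩ := Finset.mem_sdiff.mp hw
        refine ⟨hwn, ?_⟩
        rw [hAsucc, stepFn, Finset.mem_union] at hwA
        rcases hwA with h | h
        · exact absurd h hwn
        · exact (Finset.mem_filter.mp h).2
      · rintro ⟨hwn, hle⟩
        refine Finset.mem_sdiff.mpr ⟨?_, hwn⟩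
        rw [hAsucc, stepFn]
        exact Finset.mem_union_right _ (Finset.mem_filter.mpr ⟨mem_univ w, hle⟩)

lemma dynMin_exists [Fintype V] (G : SimpleGraph V) (τ : V → ℕ) :
    ∃ D : Finset V, IsDynamo G τ D ∧ D.card = dynMin G τ := by
  have hne : {n | ∃ D : Finset V, IsDynamo G τ D ∧ D.card = n}.Nonempty := by
    refine ⟨(univ : Finset V).card, univ, ?_, rfl⟩
    refine ⟨0, fun _ => univ, rfl, ?_, ?_⟩
    · intro w
      exact ⟨0, ⟨le_rfl, mem_univ w⟩, fun j hj => Nat.le_zero.mp hj.1⟩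
    · intro i hi hik; omega
  exact Nat.sInf_mem hne

lemma dynMin_le_of_key [Fintype V] (G : SimpleGraph V) {τ' : V → ℕ} {E : Finset V}
    (hE : IsDynamo G τ' E) : dynMin G τ' ≤ E.card :=
  Nat.sInf_le ⟨E, hE, rfl⟩

/-- if τ and τ' agree everywhere except at one vertex v, then
dyn_τ(G) − 1 ≤ dyn_{τ'}(G) ≤ dyn_τ(G) when τ(v) > τ'(v), and
dyn_τ(G) ≤ dyn_{τ'}(G) ≤ dyn_τ(G) + 1 when τ(v) < τ'(v). -/
theorem stmt0 {V : Type*} [Fintype V] (G : SimpleGraph V) (τ τ' : V → ℕ) (v : V)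
    (h : ∀ u : V, u ≠ v → τ u = τ' u) :
    (τ' v < τ v → dynMin G τ - 1 ≤ dynMin G τ' ∧ dynMin G τ' ≤ dynMin G τ) ∧
    (τ v < τ' v → dynMin G τ ≤ dynMin G τ' ∧ dynMin G τ' ≤ dynMin G τ + 1) := by
  obtain ⟨D, hD, hDcard⟩ := dynMin_exists G τ
  obtain ⟨D', hD', hD'card⟩ := dynMin_exists G τ'
  have hins : ∀ (σ σ' : V → ℕ), (∀ u : V, u ≠ v → σ u = σ' u) →
      ∀ E : Finset V, IsDynamo G σ' E → dynMin G σ ≤ E.card + 1 := by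
    intro σ σ' hσ E hE
    have h1 : IsDynamo G σ (insert v E) := by
      refine key G (Finset.subset_insert v E) ?_ hE
      intro u hu
      have : u ≠ v := fun hc => hu (by rw [hc]; exact Finset.mem_insert_self v E)
      exact le_of_eq (hσ u this)
    calc dynMin G σ ≤ (insert v E).card := dynMin_le_of_key G h1
    _ ≤ E.card + 1 := Finset.card_insert_le v E
  constructor
  · intro hlt
    have hmono : dynMin G τ' ≤ dynMin G τ := by
      rw [← hDcard]
      refine dynMin_le_of_key G (key G subset_rfl ?_ hD)
      intro u _
      rcases Classical.em (u = v) with rfl | hne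
      · exact le_of_lt hlt
      · exact le_of_eq (h u hne).symm
    have h2 : dynMin G τ ≤ dynMin G τ' + 1 := by
      rw [← hD'card]; exact hins τ τ' h D' hD'
    exact ⟨by omega, hmono⟩
  · intro hlt
    have hmono : dynMin G τ ≤ dynMin G τ' := by
      rw [← hD'card]
      refine dynMin_le_of_key G (key G subset_rfl ?_ hD')
      intro u _
      rcases Classical.em (u = v) with rfl | hne
      · exact le_of_lt hlt
      · exact le_of_eq (h u hne)
    have h2 : dynMin G τ' ≤ dynMin G τ + 1 := by
      rw [← hDcard]
      exact hins τ' τ (fun u hu => (h u hu).symm) D hD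
    exact ⟨hmono, h2⟩
end

section
/- Let G be a finite simple graph and let τ and τ' be two threshold assignments for the vertices of G with the same average threshold, i.e. Σ_{v∈V(G)} τ(v) = Σ_{v∈V(G)} τ'(v). Then for every integer r with dyn_τ(G) ≤ r ≤ dyn_{τ'}(G) there exists a threshold assignment τ'' with Σ_{v∈V(G)} τ''(v) = Σ_{v∈V(G)} τ(v) such that dyn_{τ''}(G) = r. In particular, the set of values {dyn_τ(G) : τ has a fixed average threshold} is a set of consecutive integers. -/
open Finset

open scoped Classical

variable {V : Type*}

section Aux

variable [Fintype V]

noncomputable def act (G : SimpleGraph V) (τ : V → ℕ) (S : Finset V) : ℕ → Finset V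
  | 0 => S
  | (i+1) => act G τ S i ∪ Finset.univ.filter
      (fun v => τ v ≤ ((act G τ S i).filter (G.Adj v)).card)

lemma mem_act_succ (G : SimpleGraph V) (τ : V → ℕ) (S : Finset V) (i : ℕ) (v : V) :
    v ∈ act G τ S (i+1) ↔ v ∈ act G τ S i ∨ τ v ≤ ((act G τ S i).filter (G.Adj v)).card := by
  simp [act]

lemma act_mono_nat (G : SimpleGraph V) (τ : V → ℕ) (S : Finset V) :
    Monotone (act G τ S) :=
  monotone_nat_of_le_succ fun _ => Finset.subset_union_left

lemma act_le {G : SimpleGraph V} {τ σ : V → ℕ} {S T : Finset V}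
    (hST : S ⊆ T) (hτ : ∀ v ∉ T, σ v ≤ τ v) :
    ∀ i, act G τ S i ⊆ act G σ T i := by
  intro i; induction i with
  | zero => exact hST
  | succ i ih =>
    intro v hv
    rw [mem_act_succ] at hv ⊢
    rcases hv with hv | hv
    · exact Or.inl (ih hv)
    · by_cases hvT : v ∈ T
      · exact Or.inl (act_mono_nat G σ T (Nat.zero_le i) hvT)
      · exact Or.inr ((hτ v hvT).trans (hv.trans (card_le_card (filter_subset_filter _ ih))))

lemma isDynamo_iff (G : SimpleGraph V) (τ : V → ℕ) (D : Finset V) :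
    IsDynamo G τ D ↔ ∃ k, act G τ D k = Finset.univ := by
  constructor
  · rintro ⟨k, f, h0, huniq, hiff⟩
    have key : ∀ i, i ≤ k → (Finset.range (i+1)).biUnion f ⊆ act G τ D i := by
      intro i
      induction i with
      | zero =>
        intro _
        have he : (Finset.range (0+1)).biUnion f = D := by
          rw [show (0:ℕ)+1 = 1 from rfl, Finset.range_one, Finset.singleton_biUnion, h0]
        rw [he]
        exact Finset.Subset.rfl
      | succ i ih =>
        intro hik
        rw [Finset.range_add_one, Finset.biUnion_insert]
        apply Finset.union_subset
        · intro v hv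
          have h2 := ((hiff (i+1) (Nat.le_add_left 1 i) hik v).1 hv).2
          rw [mem_act_succ]
          exact Or.inr (h2.trans (card_le_card
            (filter_subset_filter _ (ih (Nat.le_of_succ_le hik)))))
        · exact (ih (Nat.le_of_succ_le hik)).trans (act_mono_nat G τ D (Nat.le_succ i))
    refine ⟨k, Finset.eq_univ_of_forall fun v => ?_⟩
    obtain ⟨j, ⟨hjk, hjv⟩, -⟩ := huniq v
    exact key k le_rfl (Finset.mem_biUnion.2 ⟨j, Finset.mem_range.2 (Nat.lt_succ_of_le hjk), hjv⟩)
  · rintro ⟨k, hk⟩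
    set f : ℕ → Finset V :=
      fun i => if i = 0 then D else act G τ D i \ act G τ D (i - 1) with hf
    have hf0 : f 0 = D := rfl
    have hfs : ∀ j, f (j+1) = act G τ D (j+1) \ act G τ D j := by
      intro j; simp [hf]
    have hA : ∀ i, (Finset.range (i+1)).biUnion f = act G τ D i := by
      intro i
      induction i with
      | zero =>
        rw [Finset.range_one, Finset.singleton_biUnion, hf0]
        rfl
      | succ i ih =>
        rw [Finset.range_add_one, Finset.biUnion_insert, ih, hfs,
          Finset.sdiff_union_of_subset (act_mono_nat G τ D (Nat.le_succ i))]
    refine ⟨k, f, hf0, ?_, ?_⟩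
    · intro v
      have hp : ∃ i, v ∈ act G τ D i := ⟨k, by rw [hk]; exact Finset.mem_univ v⟩
      have huniqj : ∀ j, j ≤ k ∧ v ∈ f j → j = Nat.find hp := by
        rintro j ⟨hjk, hjf⟩
        rcases j with _ | m
        · have h0' : v ∈ act G τ D 0 := hjf
          have := Nat.find_le (h := hp) h0'
          omega
        · rw [hfs, Finset.mem_sdiff] at hjf
          have h1 : Nat.find hp ≤ m + 1 := Nat.find_le (h := hp) hjf.1
          have h2 : ¬ (Nat.find hp ≤ m) := fun hle =>
            hjf.2 (act_mono_nat G τ D hle (Nat.find_spec hp))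
          omega
      have hle : Nat.find hp ≤ k :=
        Nat.find_le (h := hp) (by rw [hk]; exact Finset.mem_univ v)
      have hmem : ∀ n, Nat.find hp = n → v ∈ f n := by
        intro n hn
        cases n with
        | zero =>
          have hs := Nat.find_spec hp
          rw [hn] at hs
          rw [hf0]
          exact hs
        | succ m =>
          rw [hfs, Finset.mem_sdiff]
          have hs := Nat.find_spec hp
          rw [hn] at hs
          exact ⟨hs, Nat.find_min hp (by omega)⟩
      exact ExistsUnique.intro (Nat.find hp) ⟨hle, hmem _ rfl⟩ huniqj
    · intro i hi1 _ v
      obtain ⟨j, rfl⟩ := Nat.exists_eq_add_of_le hi1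
      have : (1 + j : ℕ) = j + 1 := by omega
      rw [this, hfs, Finset.mem_sdiff, hA, mem_act_succ]
      tauto

lemma univ_isDynamo (G : SimpleGraph V) (τ : V → ℕ) :
    IsDynamo G τ (Finset.univ : Finset V) :=
  (isDynamo_iff G τ Finset.univ).2 ⟨0, rfl⟩

lemma dynMin_le {G : SimpleGraph V} {τ : V → ℕ} {D : Finset V} (h : IsDynamo G τ D) :
    dynMin G τ ≤ D.card :=
  Nat.sInf_le ⟨D, h, rfl⟩

lemma exists_dynMin (G : SimpleGraph V) (τ : V → ℕ) :
    ∃ D : Finset V, IsDynamo G τ D ∧ D.card = dynMin G τ := by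
  have hne : {n | ∃ D : Finset V, IsDynamo G τ D ∧ D.card = n}.Nonempty :=
    ⟨(Finset.univ : Finset V).card, Finset.univ, univ_isDynamo G τ, rfl⟩
  exact Nat.sInf_mem hne

lemma dynMin_mono {G : SimpleGraph V} {σ τ : V → ℕ} (h : ∀ v, σ v ≤ τ v) :
    dynMin G σ ≤ dynMin G τ := by
  obtain ⟨D, hD, hcard⟩ := exists_dynMin G τ
  obtain ⟨k, hk⟩ := (isDynamo_iff G τ D).1 hD
  have hu : act G σ D k = Finset.univ :=
    Finset.eq_univ_of_forall fun v =>
      act_le Finset.Subset.rfl (fun v _ => h v) k (hk ▸ Finset.mem_univ v)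
  exact hcard ▸ dynMin_le ((isDynamo_iff G σ D).2 ⟨k, hu⟩)

lemma dynMin_update_le (G : SimpleGraph V) (τ : V → ℕ) (u : V) :
    dynMin G (Function.update τ u (τ u + 1)) ≤ dynMin G τ + 1 := by
  obtain ⟨D, hD, hcard⟩ := exists_dynMin G τ
  obtain ⟨k, hk⟩ := (isDynamo_iff G τ D).1 hD
  have hsub : act G τ D k ⊆ act G (Function.update τ u (τ u + 1)) (insert u D) k :=
    act_le (Finset.subset_insert u D) (fun v hv => by
      rw [Function.update_of_ne (fun h => hv (by rw [h]; exact Finset.mem_insert_self u D))]) k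
  have hdyn : IsDynamo G (Function.update τ u (τ u + 1)) (insert u D) :=
    (isDynamo_iff _ _ _).2 ⟨k, Finset.eq_univ_of_forall fun v => hsub (hk ▸ Finset.mem_univ v)⟩
  calc dynMin G (Function.update τ u (τ u + 1)) ≤ (insert u D).card := dynMin_le hdyn
    _ ≤ D.card + 1 := Finset.card_insert_le u D
    _ = dynMin G τ + 1 := by rw [hcard]

lemma main_aux (G : SimpleGraph V) (r : ℕ) :
    ∀ d (τ τ' : V → ℕ), (∑ v, ((τ v - τ' v) + (τ' v - τ v))) = d →
      ∑ v, τ v = ∑ v, τ' v → dynMin G τ ≤ r → r ≤ dynMin G τ' →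
      ∃ τ'' : V → ℕ, (∑ v, τ'' v = ∑ v, τ v) ∧ dynMin G τ'' = r := by
  intro d
  induction d using Nat.strong_induction_on with
  | _ d ih =>
    intro τ τ' hd hsum h1 h2
    by_cases hr : dynMin G τ = r
    · exact ⟨τ, rfl, hr⟩
    have hlt : dynMin G τ < r := lt_of_le_of_ne h1 hr
    have hne : τ ≠ τ' := by rintro rfl; omega
    have hu : ∃ u, τ' u < τ u := by
      by_contra hcon; push_neg at hcon
      have heq : ∀ v, τ v = τ' v := by
        by_contra hcon2; push_neg at hcon2
        obtain ⟨v, hv⟩ := hcon2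
        have := Finset.sum_lt_sum (fun i (_ : i ∈ Finset.univ) => hcon i)
          ⟨v, Finset.mem_univ v, lt_of_le_of_ne (hcon v) hv⟩
        omega
      exact hne (funext heq)
    obtain ⟨u, hu⟩ := hu
    have hw : ∃ w, τ w < τ' w := by
      by_contra hcon; push_neg at hcon
      have heq : ∀ v, τ' v = τ v := by
        by_contra hcon2; push_neg at hcon2
        obtain ⟨v, hv⟩ := hcon2
        have := Finset.sum_lt_sum (fun i (_ : i ∈ Finset.univ) => hcon i)
          ⟨v, Finset.mem_univ v, lt_of_le_of_ne (hcon v) hv⟩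
        omega
      exact hne (funext fun v => (heq v).symm)
    obtain ⟨w, hw⟩ := hw
    have huw : u ≠ w := by rintro rfl; omega
    set σ : V → ℕ := Function.update (Function.update τ u (τ u - 1)) w (τ w + 1) with hσdef
    have hσu : σ u = τ u - 1 := by
      rw [hσdef, Function.update_of_ne huw, Function.update_self]
    have hσw : σ w = τ w + 1 := by rw [hσdef, Function.update_self]
    have hσv : ∀ v, v ≠ u → v ≠ w → σ v = τ v := by
      intro v hvu hvw
      rw [hσdef, Function.update_of_ne hvw, Function.update_of_ne hvu]
    have hσsum : ∑ v, σ v = ∑ v, τ v := by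
      rw [hσdef, Finset.sum_update_of_mem (Finset.mem_univ w), ← Finset.erase_eq,
        Finset.sum_update_of_mem (Finset.mem_erase.2 ⟨huw, Finset.mem_univ u⟩),
        ← Finset.erase_eq]
      have h3 : τ w + ∑ x ∈ Finset.univ.erase w, τ x = ∑ x, τ x :=
        Finset.add_sum_erase _ τ (Finset.mem_univ w)
      have h4 : τ u + ∑ x ∈ (Finset.univ.erase w).erase u, τ x
          = ∑ x ∈ Finset.univ.erase w, τ x :=
        Finset.add_sum_erase _ τ (Finset.mem_erase.2 ⟨huw, Finset.mem_univ u⟩)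
      omega
    have hdist : ∑ v, ((σ v - τ' v) + (τ' v - σ v)) < d := by
      rw [← hd]
      refine Finset.sum_lt_sum (fun v _ => ?_) ⟨u, Finset.mem_univ u, ?_⟩
      · rcases eq_or_ne v w with rfl | hvw
        · rw [hσw]; omega
        rcases eq_or_ne v u with rfl | hvu
        · rw [hσu]; omega
        · rw [hσv v hvu hvw]
      · rw [hσu]; omega
    have hmono : ∀ v, σ v ≤ (Function.update τ w (τ w + 1)) v := by
      intro v
      rcases eq_or_ne v w with rfl | hvw
      · rw [hσw, Function.update_self]
      rw [Function.update_of_ne hvw]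
      rcases eq_or_ne v u with rfl | hvu
      · rw [hσu]; omega
      · rw [hσv v hvu hvw]
    have hσr : dynMin G σ ≤ r :=
      le_trans (le_trans (dynMin_mono hmono) (dynMin_update_le G τ w)) (by omega)
    obtain ⟨τ'', hsum'', hdyn''⟩ := ih _ hdist σ τ' rfl (hσsum.trans hsum) hσr h2
    exact ⟨τ'', hsum''.trans hσsum, hdyn''⟩

end Aux

/-- if τ and τ' have the same average threshold, then every integer r with
dyn_τ(G) ≤ r ≤ dyn_{τ'}(G) is attained as dyn_{τ''}(G) for some τ'' with the same
average threshold. -/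
theorem stmt1 {V : Type*} [Fintype V] (G : SimpleGraph V) (τ τ' : V → ℕ)
    (h : ∑ v, τ v = ∑ v, τ' v) (r : ℕ)
    (h1 : dynMin G τ ≤ r) (h2 : r ≤ dynMin G τ') :
    ∃ τ'' : V → ℕ, (∑ v, τ'' v = ∑ v, τ v) ∧ dynMin G τ'' = r :=
  main_aux G r _ τ τ' rfl h h1 h2
end

section
/- Let G be a finite simple graph on n vertices with degree sequence d₁ ≤ d₂ ≤ … ≤ d_n, and let τ be any threshold assignment to the vertices of G (values τ(v) > deg_G(v) are allowed). Then dyn_τ(G) ≤ max{k : Σ_{i=1}^k (d_i + 1) ≤ Σ_{v∈V(G)} τ(v)}, where the maximum of the empty set is taken to be 0. -/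
open Finset

open scoped Classical

variable {V : Type*}

namespace Stmt2Aux

variable [Fintype V] (G : SimpleGraph V) (τ : V → ℕ)

/-- One step of the activation process: everything in `A` together with all vertices
having at least `τ v` neighbors in `A`. -/
noncomputable def nextS (A : Finset V) : Finset V :=
  A ∪ univ.filter (fun v => τ v ≤ (A.filter (G.Adj v)).card)

lemma subset_nextS (A : Finset V) : A ⊆ nextS G τ A := subset_union_left

lemma nextS_mono {A B : Finset V} (h : A ⊆ B) : nextS G τ A ⊆ nextS G τ B := by
  refine union_subset_union h (monotone_filter_right _ ?_)
  intro v _ hv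
  exact le_trans hv (card_le_card (filter_subset_filter _ h))

lemma iter_mono {A B : Finset V} (h : A ⊆ B) (i : ℕ) :
    (nextS G τ)^[i] A ⊆ (nextS G τ)^[i] B := by
  induction i generalizing A B with
  | zero => simp only [Function.iterate_zero, id]; exact h
  | succ n ih =>
    rw [Function.iterate_succ_apply, Function.iterate_succ_apply]
    exact ih (nextS_mono G τ h)

lemma iter_subset_succ (A : Finset V) (i : ℕ) :
    (nextS G τ)^[i] A ⊆ (nextS G τ)^[i + 1] A := by
  rw [Function.iterate_succ_apply]
  exact iter_mono G τ (subset_nextS G τ A) i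

lemma iter_le {i j : ℕ} (h : i ≤ j) (A : Finset V) :
    (nextS G τ)^[i] A ⊆ (nextS G τ)^[j] A := by
  induction j with
  | zero => simp [Nat.le_zero.mp h]
  | succ n ih =>
    rcases Nat.lt_or_ge i (n + 1) with hlt | hge
    · exact (ih (Nat.lt_succ_iff.mp hlt)).trans (iter_subset_succ G τ A n)
    · have : i = n + 1 := le_antisymm h hge
      subst this; exact subset_rfl

lemma fix_iter {B : Finset V} (h : nextS G τ B = B) (j : ℕ) : (nextS G τ)^[j] B = B := by
  induction j with
  | zero => rfl
  | succ n ih => rw [Function.iterate_succ_apply', ih, h]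

lemma exists_stab (A : Finset V) :
    ∃ k, (nextS G τ)^[k + 1] A = (nextS G τ)^[k] A := by
  by_contra hcon
  push_neg at hcon
  have grow : ∀ k, k ≤ ((nextS G τ)^[k] A).card := by
    intro k
    induction k with
    | zero => exact Nat.zero_le _
    | succ n ih =>
      have hss : (nextS G τ)^[n] A ⊂ (nextS G τ)^[n + 1] A :=
        ssubset_of_subset_of_ne (iter_subset_succ G τ A n) (Ne.symm (hcon n))
      exact Nat.succ_le_of_lt (lt_of_le_of_lt ih (card_lt_card hss))
  have h1 := grow (Fintype.card V + 1)
  have h2 : (((nextS G τ)^[Fintype.card V + 1]) A).card ≤ Fintype.card V := by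
    simpa using card_le_univ (((nextS G τ)^[Fintype.card V + 1]) A)
  omega

/-- `D` spreads to the whole vertex set. -/
def Spreads (D : Finset V) : Prop := ∃ k, (nextS G τ)^[k] D = univ

lemma spreads_univ : Spreads G τ (univ : Finset V) := ⟨0, rfl⟩


lemma exists_min_spreads :
    ∃ D : Finset V, Spreads G τ D ∧ ∀ u ∈ D, ¬ Spreads G τ (D.erase u) := by
  obtain ⟨m, hmM⟩ := Finset.exists_minimal
    (s := univ.powerset.filter (fun E : Finset V => Spreads G τ E))
    ⟨univ, mem_filter.mpr ⟨mem_powerset.mpr subset_rfl, ⟨0, rfl⟩⟩⟩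
  obtain ⟨hm, hmin⟩ : m ∈ univ.powerset.filter (fun E : Finset V => Spreads G τ E) ∧
      ∀ x ∈ univ.powerset.filter (fun E : Finset V => Spreads G τ E), ¬ x < m :=
    ⟨hmM.prop, fun x hx => hmM.not_lt hx⟩
  refine ⟨m, (mem_filter.mp hm).2, fun u hu hsp => ?_⟩
  exact hmin (m.erase u)
    (mem_filter.mpr ⟨mem_powerset.mpr ((erase_subset _ _).trans (subset_univ m)), hsp⟩)
    (erase_ssubset hu)

lemma degree_eq (u : V) : G.degree u = (univ.filter (G.Adj u)).card := by
  have h : G.neighborFinset u = univ.filter (G.Adj u) := by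
    ext w; simp [SimpleGraph.mem_neighborFinset]
  rw [← SimpleGraph.card_neighborFinset_eq_degree, h]

/-- Key combinatorial lemma: there is a spreading set whose total cost
`∑ (deg + 1)` is at most `∑ τ`. -/
lemma key : ∃ D : Finset V, Spreads G τ D ∧ ∑ u ∈ D, (G.degree u + 1) ≤ ∑ v, τ v := by
  obtain ⟨D, hD, hminD⟩ := exists_min_spreads G τ
  -- choose the stuck closure of `D.erase u` for each `u ∈ D`
  have hBex : ∀ u : V, ∃ B : Finset V, u ∈ D →
      (D.erase u ⊆ B ∧ u ∉ B ∧ ∀ y, y ∉ B → (B.filter (G.Adj y)).card < τ y) := by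
    intro u
    by_cases hu : u ∈ D
    · obtain ⟨k, hk⟩ := exists_stab G τ (D.erase u)
      refine ⟨(nextS G τ)^[k] (D.erase u), fun _ => ?_⟩
      set B := (nextS G τ)^[k] (D.erase u) with hBdef
      have hfix : nextS G τ B = B := by
        rw [hBdef, ← Function.iterate_succ_apply' (nextS G τ) k]; exact hk
      have hsub : D.erase u ⊆ B := by
        have := iter_le G τ (Nat.zero_le k) (D.erase u)
        simpa [hBdef] using this
      have hstuck : ∀ y, y ∉ B → (B.filter (G.Adj y)).card < τ y := by
        intro y hy
        by_contra hle
        push_neg at hle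
        have : y ∈ nextS G τ B :=
          mem_union_right _ (mem_filter.mpr ⟨mem_univ y, hle⟩)
        rw [hfix] at this
        exact hy this
      have hu_not : u ∉ B := by
        intro hmem
        have hDB : D ⊆ B := by
          intro w hw
          by_cases hwu : w = u
          · subst hwu; exact hmem
          · exact hsub (mem_erase.mpr ⟨hwu, hw⟩)
        obtain ⟨k₀, hk₀⟩ := hD
        have hBuniv : B = univ := by
          apply Finset.univ_subset_iff.mp
          calc univ = (nextS G τ)^[k₀] D := hk₀.symm
            _ ⊆ (nextS G τ)^[k₀] B := iter_mono G τ hDB k₀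
            _ = B := fix_iter G τ hfix k₀
        exact hminD u hu ⟨k, by rw [← hBdef, hBuniv]⟩
      exact ⟨hsub, hu_not, hstuck⟩
    · exact ⟨∅, fun h => absurd h hu⟩
  choose B hB using hBex
  refine ⟨D, hD, ?_⟩
  have deg_split : ∀ u ∈ D, G.degree u + 1 =
      (((B u).filter (G.Adj u)).card + 1) +
        (univ.filter (fun y => G.Adj u y ∧ y ∉ B u)).card := by
    intro u _
    have h1 : (univ.filter (G.Adj u)).filter (fun y => y ∈ B u)
        = (B u).filter (G.Adj u) := by
      ext w; simp [and_comm]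
    have h2 : (univ.filter (G.Adj u)).filter (fun y => y ∉ B u)
        = univ.filter (fun y => G.Adj u y ∧ y ∉ B u) := by
      rw [filter_filter]
    have h3 := card_filter_add_card_filter_not
      (s := univ.filter (G.Adj u)) (p := fun y => y ∈ B u)
    rw [degree_eq G u, ← h3, h1, h2]
    omega
  calc ∑ u ∈ D, (G.degree u + 1)
      = ∑ u ∈ D, ((((B u).filter (G.Adj u)).card + 1) +
          (univ.filter (fun y => G.Adj u y ∧ y ∉ B u)).card) := sum_congr rfl deg_split
    _ = ∑ u ∈ D, (((B u).filter (G.Adj u)).card + 1) +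
          ∑ u ∈ D, (univ.filter (fun y => G.Adj u y ∧ y ∉ B u)).card := sum_add_distrib
    _ ≤ ∑ u ∈ D, τ u + ∑ y ∈ univ, (if y ∈ D then 0 else τ y) := by
        have part1 : ∑ u ∈ D, (((B u).filter (G.Adj u)).card + 1) ≤ ∑ u ∈ D, τ u := by
          refine sum_le_sum fun u hu => ?_
          obtain ⟨-, hu_not, hstuck⟩ := hB u hu
          exact hstuck u hu_not
        have swap : ∑ u ∈ D, (univ.filter (fun y => G.Adj u y ∧ y ∉ B u)).card
            = ∑ y ∈ univ, (D.filter (fun u => G.Adj u y ∧ y ∉ B u)).card := by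
          simp_rw [card_filter]
          exact sum_comm
        have part2 : ∑ u ∈ D, (univ.filter (fun y => G.Adj u y ∧ y ∉ B u)).card
            ≤ ∑ y ∈ univ, (if y ∈ D then 0 else τ y) := by
          rw [swap]
          refine sum_le_sum fun y _ => ?_
          by_cases hyD : y ∈ D
          · -- a seed `y` is in every `B u`, so the filter is empty
            rw [if_pos hyD]
            have : D.filter (fun u => G.Adj u y ∧ y ∉ B u) = ∅ := by
              refine eq_empty_of_forall_notMem fun u hu => ?_
              obtain ⟨huD, hadj, hyB⟩ := mem_filter.mp hu
              obtain ⟨hsub, -, -⟩ := hB u huD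
              exact hyB (hsub (mem_erase.mpr ⟨hadj.ne', hyD⟩))
            simp [this]
          · rw [if_neg hyD]
            rcases (D.filter (fun u => G.Adj u y ∧ y ∉ B u)).eq_empty_or_nonempty with
              he | ⟨u0, hu0⟩
            · simp [he]
            · obtain ⟨hu0D, hadj0, hyB0⟩ := mem_filter.mp hu0
              obtain ⟨hsub0, -, hstuck0⟩ := hB u0 hu0D
              have hsub2 : (D.filter (fun u => G.Adj u y ∧ y ∉ B u)).erase u0
                  ⊆ (B u0).filter (G.Adj y) := by
                intro u hu
                obtain ⟨hne, hu'⟩ := mem_erase.mp hu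
                obtain ⟨huD, hadj, -⟩ := mem_filter.mp hu'
                exact mem_filter.mpr ⟨hsub0 (mem_erase.mpr ⟨hne, huD⟩), hadj.symm⟩
              have h4 := hstuck0 y hyB0
              have h5 := card_le_card hsub2
              have h6 := card_erase_add_one hu0
              omega
        exact add_le_add part1 part2
    _ = ∑ v, τ v := by
        have : ∑ y ∈ univ, (if y ∈ D then 0 else τ y)
            = ∑ y ∈ univ.filter (fun y => y ∉ D), τ y := by
          rw [sum_filter]
          refine sum_congr rfl fun y _ => ?_
          by_cases hyD : y ∈ D <;> simp [hyD]
        rw [this]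
        have huD : univ.filter (fun y => y ∈ D) = D := by
          ext y; simp
        conv_rhs => rw [← sum_filter_add_sum_filter_not univ (fun y => y ∈ D) τ]
        rw [huD]

lemma isDynamo_of_spreads {D : Finset V} (h : Spreads G τ D) : IsDynamo G τ D := by
  obtain ⟨k, hk⟩ := h
  set f : ℕ → Finset V := fun i =>
    match i with
    | 0 => D
    | (j + 1) => (nextS G τ)^[j + 1] D \ (nextS G τ)^[j] D with hf
  have hbU : ∀ j : ℕ, (Finset.range (j + 1)).biUnion f = (nextS G τ)^[j] D := by
    intro j
    induction j with
    | zero => simp [hf]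
    | succ n ih =>
      rw [Finset.range_add_one, Finset.biUnion_insert, ih]
      show ((nextS G τ)^[n + 1] D \ (nextS G τ)^[n] D) ∪ (nextS G τ)^[n] D
          = (nextS G τ)^[n + 1] D
      exact sdiff_union_of_subset (iter_subset_succ G τ D n)
  refine ⟨k, f, rfl, ?_, ?_⟩
  · intro v
    have hv : v ∈ (nextS G τ)^[k] D := by rw [hk]; exact mem_univ v
    have hex : ∃ i, v ∈ (nextS G τ)^[i] D := ⟨k, hv⟩
    set i₀ := Nat.find hex with hi₀
    have hspec : v ∈ (nextS G τ)^[i₀] D := Nat.find_spec hex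
    have hle : i₀ ≤ k := Nat.find_min' hex hv
    have hmemf : v ∈ f i₀ := by
      cases hi : i₀ with
      | zero =>
        rw [hi] at hspec
        exact hspec
      | succ j =>
        rw [hi] at hspec
        exact mem_sdiff.mpr ⟨hspec, Nat.find_min hex (by omega)⟩
    have huniq : ∀ i, v ∈ f i → i = i₀ := by
      intro i hvi
      match i with
      | 0 =>
        have : v ∈ (nextS G τ)^[0] D := hvi
        have h0 : i₀ ≤ 0 := Nat.find_min' hex this
        omega
      | (j + 1) =>
        obtain ⟨hin, hout⟩ := mem_sdiff.mp hvi
        have h1 : i₀ ≤ j + 1 := Nat.find_min' hex hin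
        have h2 : ¬ i₀ ≤ j := by
          intro hcon
          exact hout (iter_le G τ hcon D hspec)
        omega
    exact ⟨i₀, ⟨hle, hmemf⟩, fun i hi => huniq i hi.2⟩
  · intro i h1 _ v
    obtain ⟨j, rfl⟩ : ∃ j, i = j + 1 := ⟨i - 1, by omega⟩
    rw [hbU j]
    show v ∈ (nextS G τ)^[j + 1] D \ (nextS G τ)^[j] D ↔ _
    rw [Function.iterate_succ_apply']
    unfold nextS
    simp only [mem_sdiff, mem_union, mem_filter, mem_univ, true_and]
    tauto


lemma take_sum_le (d : List ℕ)
    (hd : d = (Finset.univ.val.map (fun v => G.degree v)).sort (· ≤ ·)) :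
    ∀ (m : ℕ) (D : Finset V), D.card = m → (d.take m).sum ≤ ∑ v ∈ D, G.degree v := by
  have hMd : (d : Multiset ℕ) = univ.val.map (fun v => G.degree v) := by
    rw [hd]; exact Multiset.sort_eq _ _
  have hlen : d.length = Fintype.card V := by
    have := congrArg Multiset.card hMd
    simpa using this
  have hsorted : d.Pairwise (· ≤ ·) := by rw [hd]; exact Multiset.pairwise_sort _ _
  intro m
  induction m with
  | zero => intro D _; simp
  | succ n ih =>
    intro D hD
    have hne : D.Nonempty := card_pos.mp (by omega)
    obtain ⟨v0, hv0D, hv0max⟩ := Finset.exists_max_image D (fun v => G.degree v) hne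
    have hcard_erase : (D.erase v0).card = n := by
      rw [card_erase_of_mem hv0D, hD]
      omega
    have hnlt : n < d.length := by
      rw [hlen]
      have h1 : D.card ≤ Fintype.card V := by
        simpa using card_le_univ D
      omega
    have hkey : d[n] ≤ G.degree v0 := by
      by_contra hlt
      push_neg at hlt
      set x := d[n] with hx
      have hsubf : D ⊆ univ.filter (fun w => G.degree w < x) := fun w hw =>
        mem_filter.mpr ⟨mem_univ w, lt_of_le_of_lt (hv0max w hw) hlt⟩
      have h1 : n + 1 ≤ (univ.filter (fun w => G.degree w < x)).card := by
        rw [← hD]; exact card_le_card hsubf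
      have hcount : (univ.filter (fun w => G.degree w < x)).card
          = Multiset.countP (fun y => y < x) (d : Multiset ℕ) := by
        rw [hMd, Multiset.countP_map]
        rfl
      have hx_le : ∀ a ∈ d.drop n, x ≤ a := by
        have hsd : (d.drop n).Pairwise (· ≤ ·) :=
          List.Pairwise.sublist (List.drop_sublist n d) hsorted
        have hdn : d.drop n = x :: d.drop (n + 1) := List.drop_eq_getElem_cons hnlt
        rw [hdn] at hsd
        intro a ha
        rw [hdn] at ha
        rcases List.mem_cons.mp ha with hax | ha'
        · exact ge_of_eq hax
        · exact List.rel_of_pairwise_cons hsd ha'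
      have hsplit : Multiset.countP (fun y => y < x) (d : Multiset ℕ) ≤ n := by
        have hd2 : (d : Multiset ℕ) = (↑(d.take n) : Multiset ℕ) + (↑(d.drop n) : Multiset ℕ) := by
          rw [Multiset.coe_add, List.take_append_drop]
        rw [hd2, Multiset.countP_add]
        have hA : Multiset.countP (fun y => y < x) (↑(d.take n) : Multiset ℕ) ≤ n := by
          calc Multiset.countP (fun y => y < x) (↑(d.take n) : Multiset ℕ)
              ≤ Multiset.card (↑(d.take n) : Multiset ℕ) := Multiset.countP_le_card _ _
            _ ≤ n := by simp
        have hB : Multiset.countP (fun y => y < x) (↑(d.drop n) : Multiset ℕ) = 0 := by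
          rw [Multiset.countP_eq_zero]
          intro a ha
          exact not_lt.mpr (hx_le a (by simpa using ha))
        omega
      omega
    have hts : (d.take (n + 1)).sum = (d.take n).sum + d[n] :=
      List.sum_take_succ d n hnlt
    calc (d.take (n + 1)).sum = (d.take n).sum + d[n] := hts
      _ ≤ (∑ v ∈ D.erase v0, G.degree v) + G.degree v0 :=
          add_le_add (ih (D.erase v0) hcard_erase) hkey
      _ = ∑ v ∈ D, G.degree v := Finset.sum_erase_add D _ hv0D


end Stmt2Aux

/-- if d₁ ≤ … ≤ d_n is the (sorted) degree sequence of G, then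
dyn_τ(G) ≤ max {k : ∑_{i=1}^k (d_i + 1) ≤ ∑_v τ(v)} (max of the empty set is 0). -/
theorem stmt2 {V : Type*} [Fintype V] (G : SimpleGraph V) (τ : V → ℕ)
    (d : List ℕ) (hd : d = (Finset.univ.val.map (fun v => G.degree v)).sort (· ≤ ·)) :
    dynMin G τ ≤
      Nat.findGreatest (fun k => (d.take k).sum + k ≤ ∑ v, τ v) (Fintype.card V) := by
  obtain ⟨D, hsp, hcost⟩ := Stmt2Aux.key G τ
  have hdyn : IsDynamo G τ D := Stmt2Aux.isDynamo_of_spreads G τ hsp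
  have h1 : dynMin G τ ≤ D.card := Nat.sInf_le ⟨D, hdyn, rfl⟩
  have hdegsum : ∑ u ∈ D, (G.degree u + 1) = (∑ u ∈ D, G.degree u) + D.card := by
    rw [Finset.sum_add_distrib]
    simp
  have htake := Stmt2Aux.take_sum_le G d hd D.card D rfl
  have hP : (d.take D.card).sum + D.card ≤ ∑ v, τ v := by omega
  have hcardle : D.card ≤ Fintype.card V := by simpa using Finset.card_le_univ D
  exact h1.trans (Nat.le_findGreatest hcardle hP)
end

section
/- Let G be a finite simple graph on n vertices with degree sequence d₁ ≤ d₂ ≤ … ≤ d_n and let t be a positive rational number. Set k₀ = max{k : Σ_{i=1}^k (d_i + 1) ≤ nt} (with max of the empty set equal to 0). Then, allowing threshold assignments in which vertices may have threshold exceeding their degree, Ldyn_t(G) = k₀; that is, dyn_τ(G) ≤ k₀ for every threshold assignment τ with average threshold τ̄ ≤ t, and there exists a threshold assignment τ with τ̄ ≤ t and dyn_τ(G) = k₀ (namely τ(v_i) = deg_G(v_i) + 1 for the k₀ vertices of smallest degree and τ(v) = 0 otherwise). -/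
open Finset

open scoped Classical

variable {V : Type*}

/-- The cumulative activation process: inside the "universe" `S`, starting from seed `D`. -/
noncomputable def actP (G : SimpleGraph V) (τ : V → ℕ) (S D : Finset V) : ℕ → Finset V :=
  fun k => Nat.rec D
    (fun _ prev => prev ∪ S.filter (fun v => τ v ≤ (prev.filter (fun w => G.Adj v w)).card)) k

lemma actP_zero (G : SimpleGraph V) (τ : V → ℕ) (S D : Finset V) :
    actP G τ S D 0 = D := rfl

lemma actP_succ (G : SimpleGraph V) (τ : V → ℕ) (S D : Finset V) (i : ℕ) :
    actP G τ S D (i + 1) = actP G τ S D i ∪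
      S.filter (fun v => τ v ≤ ((actP G τ S D i).filter (fun w => G.Adj v w)).card) := rfl

lemma actP_mono_succ (G : SimpleGraph V) (τ : V → ℕ) (S D : Finset V) (i : ℕ) :
    actP G τ S D i ⊆ actP G τ S D (i + 1) := by
  rw [actP_succ]; exact subset_union_left

lemma actP_mono (G : SimpleGraph V) (τ : V → ℕ) (S D : Finset V) {i j : ℕ} (h : i ≤ j) :
    actP G τ S D i ⊆ actP G τ S D j := by
  induction j with
  | zero => simp_all
  | succ j ih =>
    rcases Nat.lt_or_ge i (j+1) with h' | h'
    · exact (ih (by omega)).trans (actP_mono_succ G τ S D j)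
    · have : i = j + 1 := by omega
      subst this; exact subset_rfl

lemma actP_subset (G : SimpleGraph V) (τ : V → ℕ) {S D : Finset V} (hD : D ⊆ S) (i : ℕ) :
    actP G τ S D i ⊆ S := by
  induction i with
  | zero => exact hD
  | succ i ih =>
    rw [actP_succ]
    exact union_subset ih (filter_subset _ _)

/-- The key induction: inside any universe `S` there is a seed `D` that activates all of
`S`, whose total internal-degree-plus-one cost is at most the total threshold on `S`,
consisting of vertices with positive threshold. -/
lemma main_lemma (G : SimpleGraph V) (n : ℕ) : ∀ (S : Finset V), S.card ≤ n → ∀ (τ : V → ℕ),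
    ∃ D : Finset V, D ⊆ S ∧ (∃ k, S ⊆ actP G τ S D k) ∧
      (∑ v ∈ D, ((S.filter (fun w => G.Adj v w)).card + 1)) ≤ ∑ v ∈ S, τ v ∧
      ∀ v ∈ D, 1 ≤ τ v := by
  induction n with
  | zero =>
    intro S hS τ
    rw [Nat.le_zero, Finset.card_eq_zero] at hS
    subst hS
    exact ⟨∅, subset_rfl, ⟨0, subset_rfl⟩, by simp, by simp⟩
  | succ n ih =>
    intro S hcard τ
    rcases S.eq_empty_or_nonempty with rfl | hS
    · exact ⟨∅, subset_rfl, ⟨0, subset_rfl⟩, by simp, by simp⟩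
    obtain ⟨u, huS, hu0⟩ : ∃ u ∈ S, ((∃ v ∈ S, τ v = 0) → τ u = 0) := by
      by_cases h0 : ∃ v ∈ S, τ v = 0
      · obtain ⟨v, hv, h⟩ := h0; exact ⟨v, hv, fun _ => h⟩
      · obtain ⟨v, hv⟩ := hS; exact ⟨v, hv, fun h => absurd h h0⟩
    set S' : Finset V := S.erase u with hS'def
    set τ' : V → ℕ := fun w => if G.Adj u w then τ w - 1 else τ w with hτ'def
    have hcard' : S'.card ≤ n := by
      have h := Finset.card_erase_of_mem huS
      rw [← hS'def] at h
      omega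
    obtain ⟨D', hD'S', ⟨k', hk'⟩, hcost', hsupp'⟩ := ih S' hcard' τ'
    have huS' : u ∉ S' := Finset.notMem_erase u S
    have hSeq : S = insert u S' := (Finset.insert_erase huS).symm
    have hD'S : D' ⊆ S := hD'S'.trans (Finset.erase_subset _ _)
    have huD' : u ∉ D' := fun h => huS' (hD'S' h)
    have hτle : ∀ w, τ' w ≤ τ w := by
      intro w; simp only [hτ'def]; split <;> omega
    -- the lifting of the activation process
    have lift : ∀ (D : Finset V), D' ⊆ D → D ⊆ S → u ∈ actP G τ S D 1 →
        ∀ i, actP G τ' S' D' i ∪ {u} ⊆ actP G τ S D (i+1) := by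
      intro D hD'D hDS hu1 i
      induction i with
      | zero =>
        rw [actP_zero]
        exact union_subset (hD'D.trans (actP_mono G τ S D (Nat.zero_le 1)))
          (by simpa using hu1)
      | succ i ihl =>
        intro v hv
        rcases mem_union.mp hv with hv | hv
        · rw [actP_succ] at hv
          rcases mem_union.mp hv with hv | hv
          · exact actP_mono_succ G τ S D (i+1) (ihl (mem_union_left _ hv))
          · obtain ⟨hvS', hvτ'⟩ := mem_filter.mp hv
            have hact'S : actP G τ' S' D' i ⊆ S' := actP_subset G τ' hD'S' i
            have hsub : actP G τ' S' D' i ⊆ actP G τ S D (i+1) :=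
              fun x hx => ihl (mem_union_left _ hx)
            have hchain : ((actP G τ' S' D' i).filter (fun w => G.Adj v w)).card
                + (if G.Adj u v then 1 else 0)
                ≤ ((actP G τ S D (i+1)).filter (fun w => G.Adj v w)).card := by
              by_cases hadj : G.Adj u v
              · rw [if_pos hadj]
                have hu_not : u ∉ (actP G τ' S' D' i).filter (fun w => G.Adj v w) :=
                  fun h => huS' (hact'S (mem_filter.mp h).1)
                have hins : insert u ((actP G τ' S' D' i).filter (fun w => G.Adj v w)) ⊆
                    (actP G τ S D (i+1)).filter (fun w => G.Adj v w) := by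
                  intro x hx
                  rcases mem_insert.mp hx with rfl | hx
                  · exact mem_filter.mpr ⟨ihl (mem_union_right _ (mem_singleton_self x)),
                      hadj.symm⟩
                  · obtain ⟨hx1, hx2⟩ := mem_filter.mp hx
                    exact mem_filter.mpr ⟨hsub hx1, hx2⟩
                calc ((actP G τ' S' D' i).filter (fun w => G.Adj v w)).card + 1
                    = (insert u ((actP G τ' S' D' i).filter (fun w => G.Adj v w))).card :=
                      (Finset.card_insert_of_notMem hu_not).symm
                  _ ≤ _ := Finset.card_le_card hins
              · rw [if_neg hadj, Nat.add_zero]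
                exact Finset.card_le_card (Finset.filter_subset_filter _ hsub)
            have hτv : τ v ≤ τ' v + (if G.Adj u v then 1 else 0) := by
              simp only [hτ'def]; split <;> omega
            have : v ∈ actP G τ S D (i+2) := by
              rw [actP_succ]
              refine mem_union_right _ (mem_filter.mpr ⟨?_, ?_⟩)
              · rw [hSeq]; exact mem_insert_of_mem hvS'
              · omega
            exact this
        · rw [mem_singleton.mp hv]
          exact actP_mono G τ S D (by omega) hu1
    -- arithmetic bookkeeping
    have hsum_split : ∑ v ∈ S, τ v = τ u + ∑ v ∈ S', τ v := by
      rw [hSeq, Finset.sum_insert huS']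
    have hc1 : ∑ w ∈ S', τ' w + (S'.filter (fun w => G.Adj u w ∧ 1 ≤ τ w)).card
        = ∑ w ∈ S', τ w := by
      rw [Finset.card_filter, ← Finset.sum_add_distrib]
      refine Finset.sum_congr rfl (fun w _ => ?_)
      by_cases ha : G.Adj u w <;> by_cases h1 : 1 ≤ τ w <;>
        simp only [hτ'def, ha, h1, if_pos, if_neg, true_and, and_true, false_and,
          if_true, if_false, and_false, not_false_eq_true, ite_true, ite_false] <;> omega
    have he_le : (D'.filter (fun v => G.Adj u v)).card
        ≤ (S'.filter (fun w => G.Adj u w ∧ 1 ≤ τ w)).card := by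
      refine Finset.card_le_card (fun v hv => ?_)
      obtain ⟨hv1, hv2⟩ := mem_filter.mp hv
      exact mem_filter.mpr ⟨hD'S' hv1, hv2, le_trans (hsupp' v hv1) (hτle v)⟩
    have hcost_lift : ∑ v ∈ D', ((S.filter (fun w => G.Adj v w)).card + 1)
        = (∑ v ∈ D', ((S'.filter (fun w => G.Adj v w)).card + 1))
          + (D'.filter (fun v => G.Adj u v)).card := by
      rw [Finset.card_filter, ← Finset.sum_add_distrib]
      refine Finset.sum_congr rfl (fun v hv => ?_)
      have hdeg : (S.filter (fun w => G.Adj v w)).card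
          = (S'.filter (fun w => G.Adj v w)).card + (if G.Adj u v then 1 else 0) := by
        rw [hSeq, Finset.filter_insert]
        by_cases hadj : G.Adj v u
        · rw [if_pos hadj, if_pos hadj.symm,
            Finset.card_insert_of_notMem (fun h => huS' ((Finset.filter_subset _ _) h))]
        · rw [if_neg hadj, if_neg (fun h => hadj (G.adj_symm h)), Nat.add_zero]
      omega
    by_cases hcase : τ u ≤ (D'.filter (fun v => G.Adj u v)).card
    · -- u is activated by D' itself
      refine ⟨D', hD'S, ⟨k' + 1, ?_⟩, ?_, fun v hv => le_trans (hsupp' v hv) (hτle v)⟩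
      · have hu1 : u ∈ actP G τ S D' 1 := by
          rw [actP_succ, actP_zero]
          exact mem_union_right _ (mem_filter.mpr ⟨huS, hcase⟩)
        have hl := lift D' subset_rfl hD'S hu1
        intro w hw
        rcases Finset.mem_insert.mp (by rwa [hSeq] at hw) with rfl | hw'
        · exact (hl k') (mem_union_right _ (mem_singleton_self w))
        · exact (hl k') (mem_union_left _ (hk' hw'))
      · omega
    · -- u must be added to the seed
      have hτu1 : 1 ≤ τ u := by omega
      have hno : ∀ w ∈ S, 1 ≤ τ w := by
        intro w hw
        by_contra h
        have : τ u = 0 := hu0 ⟨w, hw, by omega⟩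
        omega
      have hfilter_eq : (S'.filter (fun w => G.Adj u w ∧ 1 ≤ τ w))
          = S'.filter (fun w => G.Adj u w) := by
        refine Finset.filter_congr (fun w hw => ?_)
        simp [hno w ((Finset.erase_subset _ _) hw)]
      have hdegu : (S.filter (fun w => G.Adj u w)).card
          = (S'.filter (fun w => G.Adj u w)).card := by
        rw [hSeq, Finset.filter_insert, if_neg (G.irrefl)]
      refine ⟨insert u D', Finset.insert_subset huS hD'S, ⟨k' + 1, ?_⟩, ?_, ?_⟩
      · have hu1 : u ∈ actP G τ S (insert u D') 1 := by
          refine actP_mono G τ S _ (Nat.zero_le 1) ?_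
          rw [actP_zero]; exact mem_insert_self u D'
        have hl := lift (insert u D') (Finset.subset_insert u D')
          (Finset.insert_subset huS hD'S) hu1
        intro w hw
        rcases Finset.mem_insert.mp (by rwa [hSeq] at hw) with rfl | hw'
        · exact (hl k') (mem_union_right _ (mem_singleton_self w))
        · exact (hl k') (mem_union_left _ (hk' hw'))
      · rw [Finset.sum_insert huD']
        rw [hfilter_eq] at hc1
        omega
      · intro v hv
        rcases mem_insert.mp hv with rfl | hv
        · exact hτu1
        · exact le_trans (hsupp' v hv) (hτle v)

/-- From the canonical activation covering everything, we get a genuine dynamo witness. -/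
lemma isDynamo_of_actP [Fintype V] (G : SimpleGraph V) (τ : V → ℕ) (D : Finset V)
    (h : ∃ k, (univ : Finset V) ⊆ actP G τ univ D k) : IsDynamo G τ D := by
  obtain ⟨k, hk⟩ := h
  set f : ℕ → Finset V := fun i => match i with
    | 0 => D
    | (i+1) => actP G τ univ D (i+1) \ actP G τ univ D i with hfdef
  have hbi : ∀ i, (Finset.range (i+1)).biUnion f = actP G τ univ D i := by
    intro i
    induction i with
    | zero => simp [hfdef, actP_zero]
    | succ i ihb =>
      rw [Finset.range_add_one, Finset.biUnion_insert, ihb]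
      have : f (i+1) = actP G τ univ D (i+1) \ actP G τ univ D i := rfl
      rw [this, Finset.sdiff_union_of_subset (actP_mono_succ G τ univ D i)]
  have hfsub : ∀ i, f i ⊆ actP G τ univ D i := by
    intro i
    match i with
    | 0 => exact subset_rfl
    | (i+1) => exact Finset.sdiff_subset
  refine ⟨k, f, rfl, ?_, ?_⟩
  · intro v
    have hv : v ∈ (Finset.range (k+1)).biUnion f := by rw [hbi]; exact hk (mem_univ v)
    obtain ⟨i, hi, hvi⟩ := Finset.mem_biUnion.mp hv
    have hik : i ≤ k := by have := Finset.mem_range.mp hi; omega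
    refine ⟨i, ⟨hik, hvi⟩, ?_⟩
    rintro j ⟨hjk, hvj⟩
    by_contra hne
    have key : ∀ a b, a < b → v ∈ f a → v ∈ f b → False := by
      intro a b hab hva hvb
      match b, hab with
      | (b+1), hab =>
        have h1 : v ∉ actP G τ univ D b := (Finset.mem_sdiff.mp hvb).2
        exact h1 (actP_mono G τ univ D (by omega) (hfsub a hva))
    rcases Nat.lt_or_ge j i with h' | h'
    · exact key j i h' hvj hvi
    · exact key i j (by omega) hvi hvj
  · intro i h1 hik v
    obtain ⟨j, rfl⟩ : ∃ j, i = j + 1 := ⟨i - 1, by omega⟩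
    rw [hbi j]
    have hfj : f (j+1) = actP G τ univ D (j+1) \ actP G τ univ D j := rfl
    rw [hfj, Finset.mem_sdiff, actP_succ]
    constructor
    · rintro ⟨hmem, hnot⟩
      rcases mem_union.mp hmem with h | h
      · exact absurd h hnot
      · exact ⟨hnot, (mem_filter.mp h).2⟩
    · rintro ⟨hnot, hle⟩
      exact ⟨mem_union_right _ (mem_filter.mpr ⟨mem_univ v, hle⟩), hnot⟩

/-- Any vertex with threshold exceeding its degree lies in every dynamo. -/
lemma selfOp_mem_dynamo [Fintype V] (G : SimpleGraph V) (τ : V → ℕ) (v : V)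
    (hv : G.degree v + 1 ≤ τ v) (D : Finset V) (h : IsDynamo G τ D) : v ∈ D := by
  obtain ⟨k, f, hf0, huniq, hiff⟩ := h
  obtain ⟨i, ⟨hik, hvi⟩, -⟩ := huniq v
  match i with
  | 0 => rwa [hf0] at hvi
  | (j+1) =>
    exfalso
    obtain ⟨-, hle⟩ := (hiff (j+1) (by omega) hik v).mp hvi
    have h1 : ((Finset.range (j+1)).biUnion f).filter (G.Adj v) ⊆ G.neighborFinset v := by
      intro w hw
      rw [SimpleGraph.mem_neighborFinset]
      exact (mem_filter.mp hw).2
    have h2 := Finset.card_le_card h1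
    rw [SimpleGraph.card_neighborFinset_eq_degree] at h2
    omega

/-- prefix sums of a sorted list bound sums of sub-multisets. -/
lemma take_sorted_sum_le : ∀ (d : List ℕ), d.Pairwise (· ≤ ·) → ∀ m : Multiset ℕ,
    m ≤ (d : Multiset ℕ) → (d.take (Multiset.card m)).sum ≤ m.sum := by
  intro d
  induction d with
  | nil =>
    intro _ m hm
    have : m = 0 := by simpa using Multiset.le_zero.mp (by simpa using hm)
    simp [this]
  | cons a d ihd =>
    intro hsort m hm
    rcases eq_or_ne m 0 with rfl | hm0
    · simp
    have hclt : 1 ≤ Multiset.card m := by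
      have := Multiset.card_pos.mpr hm0; omega
    by_cases ha : a ∈ m
    · have h1 : m.erase a ≤ (d : Multiset ℕ) := by
        have h2 := Multiset.erase_le_erase a hm
        rwa [show ((a :: d : List ℕ) : Multiset ℕ) = a ::ₘ (d : Multiset ℕ) from rfl,
          Multiset.erase_cons_head] at h2
      have hcard : Multiset.card m = Multiset.card (m.erase a) + 1 := by
        rw [Multiset.card_erase_of_mem ha, Nat.pred_eq_sub_one]; omega
      have hsum : m.sum = a + (m.erase a).sum := by
        conv_lhs => rw [← Multiset.cons_erase ha]
        rw [Multiset.sum_cons]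
      rw [hcard, List.take_succ_cons, List.sum_cons, hsum]
      exact Nat.add_le_add_left (ihd (List.pairwise_cons.mp hsort).2 _ h1) a
    · have h1 : m ≤ (d : Multiset ℕ) := by
        rw [Multiset.le_iff_count]
        intro x
        have hx := Multiset.le_iff_count.mp hm x
        by_cases hxa : x = a
        · subst hxa
          simp [Multiset.count_eq_zero_of_notMem ha]
        · rwa [show ((a :: d : List ℕ) : Multiset ℕ) = a ::ₘ (d : Multiset ℕ) from rfl,
            Multiset.count_cons_of_ne hxa] at hx
      have hc_le : Multiset.card m ≤ d.length := by
        have := Multiset.card_le_card h1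
        simpa using this
      obtain ⟨c, hc⟩ : ∃ c, Multiset.card m = c + 1 := ⟨Multiset.card m - 1, by omega⟩
      have hih := ihd (List.pairwise_cons.mp hsort).2 m h1
      rw [hc] at hih ⊢
      rw [List.take_succ_cons, List.sum_cons]
      have hlt : c < d.length := by omega
      have hstep : (d.take (c+1)).sum = (d.take c).sum + d[c] := List.sum_take_succ d c hlt
      have hale : a ≤ d[c] := (List.pairwise_cons.mp hsort).1 _ (List.getElem_mem hlt)
      omega

/-- with d₁ ≤ … ≤ d_n the sorted degree sequence and
k₀ = max {k : ∑_{i=1}^k (d_i + 1) ≤ n·t}, allowing thresholds exceeding degrees,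
Ldyn_t(G) = k₀: every τ with average threshold ≤ t has dyn_τ(G) ≤ k₀, and some τ with
average threshold ≤ t attains dyn_τ(G) = k₀. -/
theorem stmt3 {V : Type*} [Fintype V] (G : SimpleGraph V) (t : ℚ) (ht : 0 < t)
    (d : List ℕ) (hd : d = (Finset.univ.val.map (fun v => G.degree v)).sort (· ≤ ·))
    (k₀ : ℕ)
    (hk₀ : k₀ = Nat.findGreatest
      (fun k => (((d.take k).sum + k : ℕ) : ℚ) ≤ (Fintype.card V) * t) (Fintype.card V)) :
    (∀ τ : V → ℕ, (∑ v, (τ v : ℚ)) ≤ t * (Fintype.card V) → dynMin G τ ≤ k₀) ∧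
    (∃ τ : V → ℕ, (∑ v, (τ v : ℚ)) ≤ t * (Fintype.card V) ∧ dynMin G τ = k₀) := by
  have hdsort : d.Pairwise (· ≤ ·) := by rw [hd]; exact Multiset.pairwise_sort _ _
  have hdcoe : (d : Multiset ℕ) = Finset.univ.val.map (fun v => G.degree v) := by
    rw [hd]; exact Multiset.sort_eq _ _
  have hdeg_filter : ∀ v : V, ((univ : Finset V).filter (fun w => G.Adj v w)).card
      = G.degree v := by
    intro v
    have : (univ : Finset V).filter (fun w => G.Adj v w) = G.neighborFinset v := by
      ext w; simp [SimpleGraph.mem_neighborFinset]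
    rw [this, SimpleGraph.card_neighborFinset_eq_degree]
  constructor
  · -- upper bound for every τ
    intro τ hτ
    obtain ⟨D, hDu, hcov, hcost, -⟩ :=
      main_lemma G (Fintype.card V) univ (by rw [Finset.card_univ]) τ
    have hdyn : IsDynamo G τ D := isDynamo_of_actP G τ D hcov
    -- cost in terms of degrees
    have hcost2 : ∑ v ∈ D, (G.degree v + 1) ≤ ∑ v ∈ univ, τ v := by
      calc ∑ v ∈ D, (G.degree v + 1)
          = ∑ v ∈ D, (((univ : Finset V).filter (fun w => G.Adj v w)).card + 1) :=
            Finset.sum_congr rfl (fun v _ => by rw [hdeg_filter v])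
        _ ≤ _ := hcost
    -- prefix of sorted degrees
    have hm : (D.val.map (fun v => G.degree v)) ≤ (d : Multiset ℕ) := by
      rw [hdcoe]
      exact Multiset.map_le_map (Finset.val_le_iff.mpr (Finset.subset_univ D))
    have hmcard : Multiset.card (D.val.map (fun v => G.degree v)) = D.card := by
      simp
    have htake := take_sorted_sum_le d hdsort _ hm
    rw [hmcard] at htake
    have hmsum : (D.val.map (fun v => G.degree v)).sum = ∑ v ∈ D, G.degree v := rfl
    rw [hmsum] at htake
    have hsum_deg : ∑ v ∈ D, (G.degree v + 1) = (∑ v ∈ D, G.degree v) + D.card := by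
      rw [Finset.sum_add_distrib, Finset.sum_const, smul_eq_mul, mul_one]
    have hnat : (d.take D.card).sum + D.card ≤ ∑ v ∈ univ, τ v := by omega
    have hcast : (((d.take D.card).sum + D.card : ℕ) : ℚ) ≤ (Fintype.card V) * t := by
      calc (((d.take D.card).sum + D.card : ℕ) : ℚ) ≤ ((∑ v ∈ univ, τ v : ℕ) : ℚ) := by
            exact_mod_cast hnat
        _ = ∑ v, (τ v : ℚ) := by rw [Nat.cast_sum]
        _ ≤ t * (Fintype.card V) := hτ
        _ = (Fintype.card V) * t := mul_comm _ _
    have hle : D.card ≤ k₀ := by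
      rw [hk₀]
      exact Nat.le_findGreatest (Finset.card_le_univ D) hcast
    have : dynMin G τ ≤ D.card := Nat.sInf_le ⟨D, hdyn, rfl⟩
    omega
  · -- the extremal τ
    -- sorted list of vertices
    set degb : V → V → Bool := fun a b => decide (G.degree a ≤ G.degree b) with hdegb
    set l := (univ : Finset V).toList.mergeSort degb with hl
    have hlperm : List.Perm l ((univ : Finset V).toList) := List.mergeSort_perm _ _
    have hlnd : l.Nodup := hlperm.symm.nodup (Finset.nodup_toList _)
    have hlsorted : (l.map (fun v => G.degree v)).Pairwise (· ≤ ·) := by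
      have hp : List.Pairwise (fun a b => degb a b = true) l :=
        List.pairwise_mergeSort (le := degb)
          (by intro a b c; simp only [hdegb, decide_eq_true_eq]; omega)
          (by intro a b; simp only [hdegb, Bool.or_eq_true, decide_eq_true_eq]; omega) _
      rw [List.pairwise_map]
      exact hp.imp (by intro a b h; simpa [hdegb, decide_eq_true_eq] using h)
    have hmapeq : l.map (fun v => G.degree v) = d := by
      refine List.Perm.eq_of_pairwise' hlsorted hdsort ?_
      rw [← Multiset.coe_eq_coe]
      show ((l.map (fun v => G.degree v) : List ℕ) : Multiset ℕ) = (d : Multiset ℕ)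
      rw [hdcoe]
      have h1 : (↑l : Multiset V) = Finset.univ.val := by
        rw [Multiset.coe_eq_coe.mpr hlperm, Finset.coe_toList]
      calc (↑(l.map (fun v => G.degree v)) : Multiset ℕ)
          = Multiset.map (fun v => G.degree v) (↑l : Multiset V) := rfl
        _ = Multiset.map (fun v => G.degree v) Finset.univ.val := by rw [h1]
    have hllen : l.length = Fintype.card V := by
      rw [hlperm.length_eq, Finset.length_toList, Finset.card_univ]
    have hk₀le : k₀ ≤ Fintype.card V := by rw [hk₀]; exact Nat.findGreatest_le _
    set S₀ : Finset V := (l.take k₀).toFinset with hS₀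
    have htakend : (l.take k₀).Nodup := (List.take_sublist _ _).nodup hlnd
    have hS₀card : S₀.card = k₀ := by
      rw [hS₀, List.toFinset_card_of_nodup htakend, List.length_take, hllen]
      omega
    have hS₀sum : ∑ v ∈ S₀, G.degree v = (d.take k₀).sum := by
      rw [hS₀, List.sum_toFinset _ htakend, List.map_take, hmapeq]
    set τ : V → ℕ := fun v => if v ∈ S₀ then G.degree v + 1 else 0 with hτdef
    have hτsum : ∑ v ∈ univ, τ v = (d.take k₀).sum + k₀ := by
      rw [hτdef]
      rw [Finset.sum_ite_mem, Finset.univ_inter, Finset.sum_add_distrib,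
        Finset.sum_const, smul_eq_mul, mul_one, hS₀sum, hS₀card]
    -- P k₀ holds
    have hP : (((d.take k₀).sum + k₀ : ℕ) : ℚ) ≤ (Fintype.card V) * t := by
      have hP0 : (((d.take 0).sum + 0 : ℕ) : ℚ) ≤ (Fintype.card V) * t := by
        simpa using mul_nonneg (Nat.cast_nonneg (Fintype.card V)) ht.le
      rw [hk₀]
      exact Nat.findGreatest_spec
        (P := fun k => (((d.take k).sum + k : ℕ) : ℚ) ≤ (Fintype.card V) * t)
        (Nat.zero_le _) hP0
    have hτQ : (∑ v, (τ v : ℚ)) ≤ t * (Fintype.card V) := by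
      rw [← Nat.cast_sum, hτsum]
      calc (((d.take k₀).sum + k₀ : ℕ) : ℚ) ≤ (Fintype.card V) * t := hP
        _ = t * (Fintype.card V) := mul_comm _ _
    refine ⟨τ, hτQ, ?_⟩
    -- S₀ is a dynamo
    have hdynS₀ : IsDynamo G τ S₀ := by
      refine isDynamo_of_actP G τ S₀ ⟨1, fun v _ => ?_⟩
      rw [actP_succ, actP_zero]
      by_cases hv : v ∈ S₀
      · exact mem_union_left _ hv
      · refine mem_union_right _ (mem_filter.mpr ⟨mem_univ v, ?_⟩)
        simp [hτdef, hv]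
    -- every dynamo contains S₀
    have hcontain : ∀ D : Finset V, IsDynamo G τ D → S₀ ⊆ D := by
      intro D hD v hv
      refine selfOp_mem_dynamo G τ v ?_ D hD
      rw [hτdef]; simp [hv]
    have hmem : k₀ ∈ {n | ∃ D : Finset V, IsDynamo G τ D ∧ D.card = n} :=
      ⟨S₀, hdynS₀, hS₀card⟩
    have hle : dynMin G τ ≤ k₀ := Nat.sInf_le hmem
    have hge : k₀ ≤ dynMin G τ := by
      obtain ⟨D, hD, hcard⟩ := Nat.sInf_mem (⟨k₀, hmem⟩ :
        {n | ∃ D : Finset V, IsDynamo G τ D ∧ D.card = n}.Nonempty)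
      rw [dynMin, ← hcard] at *
      calc k₀ = S₀.card := hS₀card.symm
        _ ≤ D.card := Finset.card_le_card (hcontain D hD)
        _ = _ := hcard
    omega
end

section
/- For each n ≥ 1, let G_n be the graph whose vertex set is the disjoint union of a complete graph K_n and n copies of the complete graph K_{n+1}, where each copy of K_{n+1} is joined to K_n by exactly one edge (distinct copies using distinct endpoints interactions, each copy connected by a single edge). Define τ_n(v) = 0 for each vertex v of K_n and τ_n(v) = deg_{G_n}(v) for each vertex v in any copy of K_{n+1}. Then every τ_n-dynamic monopoly of G_n contains at least n vertices of each copy of K_{n+1}; consequently dyn_{τ_n}(G_n) ≥ n². -/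
open Finset

open scoped Classical

variable {V : Type*}

/-- The graph G_n: a copy of K_n (the `Sum.inl` vertices) together with n copies of
K_{n+1} (copy i is the set of vertices `Sum.inr (i, a)`), where copy i is joined to
the vertex i of K_n by exactly one edge (distinct copies use distinct endpoints). -/
def Gn (n : ℕ) : SimpleGraph (Fin n ⊕ Fin n × Fin (n + 1)) :=
  SimpleGraph.fromRel (fun x y =>
    match x, y with
    | Sum.inl _, Sum.inl _ => True
    | Sum.inr ⟨i, _⟩, Sum.inr ⟨j, _⟩ => i = j
    | Sum.inl a, Sum.inr ⟨j, b⟩ => a = j ∧ b = 0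
    | Sum.inr _, Sum.inl _ => False)

/-- The threshold assignment τ_n: 0 on K_n, and the full degree on every vertex of the
copies of K_{n+1}. -/
noncomputable def tauN (n : ℕ) : (Fin n ⊕ Fin n × Fin (n + 1)) → ℕ :=
  fun x =>
    match x with
    | Sum.inl _ => 0
    | Sum.inr p => (Gn n).degree (Sum.inr p)

lemma gn_adj (n : ℕ) (i : Fin n) (a b : Fin (n+1)) (hab : a ≠ b) :
    (Gn n).Adj (Sum.inr (i,a)) (Sum.inr (i,b)) := by
  simp [Gn, SimpleGraph.fromRel_adj, hab]

/-- Auxiliary: if two distinct vertices of copy `i` both activate at step ≥ 1,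
with the first at step `sa ≤ sb`, we get a contradiction. -/
lemma key_aux (n : ℕ) (k : ℕ) (f : ℕ → Finset (Fin n ⊕ Fin n × Fin (n + 1)))
    (hstep : ∀ j, 1 ≤ j → j ≤ k → ∀ v, v ∈ f j ↔ v ∉ (Finset.range j).biUnion f ∧
        tauN n v ≤ (((Finset.range j).biUnion f).filter ((Gn n).Adj v)).card)
    (i : Fin n) (a b : Fin (n+1)) (hab : a ≠ b)
    (sa sb : ℕ) (hsak : sa ≤ k) (hsaf : Sum.inr (i,a) ∈ f sa)
    (hsbu : ∀ j, (j ≤ k ∧ (Sum.inr (i,b) : Fin n ⊕ Fin n × Fin (n+1)) ∈ f j) → j = sb)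
    (hsbk : sb ≤ k)
    (h1 : 1 ≤ sa) (hle : sa ≤ sb) : False := by
  have hadj : (Gn n).Adj (Sum.inr (i,a)) (Sum.inr (i,b)) := gn_adj n i a b hab
  have hnb : (Sum.inr (i,b) : Fin n ⊕ Fin n × Fin (n+1)) ∉ (Finset.range sa).biUnion f := by
    intro hmem
    rw [Finset.mem_biUnion] at hmem
    obtain ⟨j, hj, hjf⟩ := hmem
    rw [Finset.mem_range] at hj
    have hjk : j ≤ k := le_trans (le_of_lt hj) (le_trans hle hsbk)
    have := hsbu j ⟨hjk, hjf⟩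
    omega
  have htau := ((hstep sa h1 hsak (Sum.inr (i,a))).mp hsaf).2
  have hsub : ((Finset.range sa).biUnion f).filter ((Gn n).Adj (Sum.inr (i,a))) ⊆
      (Gn n).neighborFinset (Sum.inr (i,a)) := by
    intro x hx
    rw [Finset.mem_filter] at hx
    rw [SimpleGraph.mem_neighborFinset]
    exact hx.2
  have hmemN : (Sum.inr (i,b) : Fin n ⊕ Fin n × Fin (n+1)) ∈
      (Gn n).neighborFinset (Sum.inr (i,a)) := by
    rw [SimpleGraph.mem_neighborFinset]; exact hadj
  have hnotF : (Sum.inr (i,b) : Fin n ⊕ Fin n × Fin (n+1)) ∉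
      ((Finset.range sa).biUnion f).filter ((Gn n).Adj (Sum.inr (i,a))) := by
    intro hx
    exact hnb (Finset.mem_filter.mp hx).1
  have hlt : (((Finset.range sa).biUnion f).filter ((Gn n).Adj (Sum.inr (i,a)))).card <
      ((Gn n).neighborFinset (Sum.inr (i,a))).card :=
    Finset.card_lt_card ((Finset.ssubset_iff_of_subset hsub).mpr ⟨_, hmemN, hnotF⟩)
  have hdeg : tauN n (Sum.inr (i,a)) = ((Gn n).neighborFinset (Sum.inr (i,a))).card := rfl
  omega

lemma key_s4 (n : ℕ) (D : Finset (Fin n ⊕ Fin n × Fin (n + 1)))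
    (h : IsDynamo (Gn n) (tauN n) D) (i : Fin n) :
    n ≤ (D.filter (fun x => ∃ a, x = Sum.inr (i, a))).card := by
  by_contra hcard
  push_neg at hcard
  set T : Finset (Fin (n+1)) := univ.filter (fun a => Sum.inr (i,a) ∈ D) with hT
  have hinj : Function.Injective
      (fun a : Fin (n+1) => (Sum.inr (i,a) : Fin n ⊕ Fin n × Fin (n+1))) := by
    intro a b hab; simpa using hab
  have himg : D.filter (fun x => ∃ a, x = Sum.inr (i, a)) =
      T.image (fun a => Sum.inr (i,a)) := by
    ext x
    simp only [Finset.mem_filter, Finset.mem_image, hT, Finset.mem_univ, true_and]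
    constructor
    · rintro ⟨hxD, a, rfl⟩; exact ⟨a, hxD, rfl⟩
    · rintro ⟨a, haD, rfl⟩; exact ⟨haD, a, rfl⟩
  have hTcard : T.card < n := by
    rw [himg, Finset.card_image_of_injective _ hinj] at hcard; exact hcard
  have hcompl : 1 < Tᶜ.card := by
    rw [Finset.card_compl]
    simp only [Fintype.card_fin]
    omega
  obtain ⟨a, ha, b, hb, hab⟩ := Finset.one_lt_card.mp hcompl
  simp only [Finset.mem_compl, hT, Finset.mem_filter, Finset.mem_univ, true_and] at ha hb
  obtain ⟨k, f, hf0, huniq, hstep⟩ := h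
  have hE : ∀ (s : Finset ℕ) (t : ℕ → Finset (Fin n ⊕ Fin n × Fin (n+1))),
      @Finset.biUnion ℕ _ (fun a b => Classical.propDecidable (a = b)) s t = s.biUnion t := by
    intro s t; congr!
  simp only [hE] at hstep
  obtain ⟨sa, ⟨hsak, hsaf⟩, hsau⟩ := huniq (Sum.inr (i,a))
  obtain ⟨sb, ⟨hsbk, hsbf⟩, hsbu⟩ := huniq (Sum.inr (i,b))
  have ha1 : 1 ≤ sa := by
    rcases Nat.eq_zero_or_pos sa with h0 | h0
    · subst h0; rw [hf0] at hsaf; exact absurd hsaf ha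
    · exact h0
  have hb1 : 1 ≤ sb := by
    rcases Nat.eq_zero_or_pos sb with h0 | h0
    · subst h0; rw [hf0] at hsbf; exact absurd hsbf hb
    · exact h0
  rcases le_total sa sb with hle | hle
  · exact key_aux n k f hstep i a b hab sa sb hsak hsaf hsbu hsbk ha1 hle
  · exact key_aux n k f hstep i b a hab.symm sb sa hsbk hsbf hsau hsak hb1 hle

/-- every τ_n-dynamic monopoly of G_n contains at least n vertices of each
copy of K_{n+1}; consequently dyn_{τ_n}(G_n) ≥ n². -/
theorem stmt4 (n : ℕ) (hn : 1 ≤ n) :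
    (∀ D : Finset (Fin n ⊕ Fin n × Fin (n + 1)), IsDynamo (Gn n) (tauN n) D →
      ∀ i : Fin n, n ≤ (D.filter (fun x => ∃ a, x = Sum.inr (i, a))).card) ∧
    n ^ 2 ≤ dynMin (Gn n) (tauN n) := by
  refine ⟨fun D hD i => key_s4 n D hD i, ?_⟩
  have huniv : IsDynamo (Gn n) (tauN n) (univ : Finset (Fin n ⊕ Fin n × Fin (n+1))) :=
    ⟨0, fun _ => univ, rfl,
      fun v => ⟨0, ⟨le_refl 0, Finset.mem_univ v⟩, fun j hj => Nat.le_zero.mp hj.1⟩,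
      fun j h1 h0 => absurd (h1.trans h0) (by omega)⟩
  have hne : {m | ∃ D : Finset (Fin n ⊕ Fin n × Fin (n+1)),
      IsDynamo (Gn n) (tauN n) D ∧ D.card = m}.Nonempty :=
    ⟨(univ : Finset (Fin n ⊕ Fin n × Fin (n+1))).card, univ, huniv, rfl⟩
  apply le_csInf hne
  rintro m ⟨D, hD, rfl⟩
  have hdisj : ∀ x ∈ (univ : Finset (Fin n)), ∀ y ∈ (univ : Finset (Fin n)), x ≠ y →
      Disjoint (D.filter (fun v => ∃ a, v = Sum.inr (x, a)))
        (D.filter (fun v => ∃ a, v = Sum.inr (y, a))) := by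
    intro x _ y _ hxy
    rw [Finset.disjoint_left]
    intro v hvx hvy
    obtain ⟨a, rfl⟩ := (Finset.mem_filter.mp hvx).2
    obtain ⟨c, hc⟩ := (Finset.mem_filter.mp hvy).2
    apply hxy
    simpa using congrArg (fun w => match w with | Sum.inr (p, _) => p | Sum.inl p => x) hc
  calc n ^ 2 = (univ : Finset (Fin n)).card • n := by simp [sq]
    _ ≤ ∑ i : Fin n, (D.filter (fun v => ∃ a, v = Sum.inr (i, a))).card :=
        Finset.card_nsmul_le_sum _ _ _ (fun i _ => key_s4 n D hD i)
    _ = ((univ : Finset (Fin n)).biUnion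
          (fun i => D.filter (fun v => ∃ a, v = Sum.inr (i, a)))).card :=
        (Finset.card_biUnion hdisj).symm
    _ ≤ D.card := Finset.card_le_card (by
        intro v hv
        obtain ⟨i, _, hvi⟩ := Finset.mem_biUnion.mp hv
        exact (Finset.mem_filter.mp hvi).1)
end

section
/- Let G be a finite simple graph with threshold assignment τ. A set D ⊆ V(G) is a τ-dynamic monopoly of G if and only if the induced subgraph G ∖ D contains no nonempty τ-resistant subgraph. -/
open Finset

open scoped Classical

variable {V : Type*}

/-- A finset `K` of vertices induces a `τ`-resistant subgraph of `G`: every `v ∈ K`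
satisfies deg_K(v) ≥ deg_G(v) − τ(v) + 1 (stated additively to avoid truncated
subtraction). -/
def IsResistant {V : Type*} [Fintype V] (G : SimpleGraph V) (τ : V → ℕ) (K : Finset V) : Prop :=
  ∀ v ∈ K, G.degree v + 1 ≤ (K.filter (G.Adj v)).card + τ v

namespace Stmt7Aux

variable {V : Type*} [Fintype V]

/-- Cumulative set of activated vertices. -/
noncomputable def accum (G : SimpleGraph V) (τ : V → ℕ) (D : Finset V) : ℕ → Finset V
  | 0 => D
  | n + 1 => accum G τ D n ∪ Finset.univ.filter
      (fun v => τ v ≤ ((accum G τ D n).filter (G.Adj v)).card)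

variable {G : SimpleGraph V} {τ : V → ℕ} {D : Finset V}

lemma accum_subset_succ (n : ℕ) : accum G τ D n ⊆ accum G τ D (n + 1) :=
  Finset.subset_union_left

lemma accum_mono {m n : ℕ} (h : m ≤ n) : accum G τ D m ⊆ accum G τ D n := by
  induction n with
  | zero => simpa [Nat.le_zero.mp h] using Finset.Subset.refl _
  | succ n ih =>
    rcases Nat.lt_or_ge m (n + 1) with h' | h'
    · exact (ih (Nat.lt_succ_iff.mp h')).trans (accum_subset_succ n)
    · have : m = n + 1 := le_antisymm h h'
      subst this; exact Finset.Subset.refl _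

lemma accum_stab {m : ℕ} (h : accum G τ D (m + 1) = accum G τ D m) :
    ∀ n, m ≤ n → accum G τ D n = accum G τ D m := by
  intro n hn
  induction n with
  | zero => simp [Nat.le_zero.mp hn]
  | succ n ih =>
    rcases Nat.lt_or_ge m (n + 1) with h' | h'
    · have hmn : m ≤ n := Nat.lt_succ_iff.mp h'
      have : accum G τ D (n + 1) = accum G τ D (m + 1) := by
        rw [accum, accum, ih hmn]
      rw [this, h]
    · have : m = n + 1 := le_antisymm hn h'
      rw [this]

lemma accum_card {N : ℕ} (h : ∀ m < N, accum G τ D (m + 1) ≠ accum G τ D m) :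
    N ≤ (accum G τ D N).card := by
  induction N with
  | zero => exact Nat.zero_le _
  | succ N ih =>
    have h1 : N ≤ (accum G τ D N).card :=
      ih (fun m hm => h m (hm.trans (Nat.lt_succ_self N)))
    have h2 : accum G τ D N ⊂ accum G τ D (N + 1) :=
      Finset.ssubset_iff_subset_ne.mpr ⟨accum_subset_succ N, (h N (Nat.lt_succ_self N)).symm.symm ∘ Eq.symm⟩
    have := Finset.card_lt_card h2
    omega

lemma accum_univ
    (h : ∀ K : Finset V, K ⊆ Finset.univ \ D → K.Nonempty → ¬ IsResistant G τ K) :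
    accum G τ D (Fintype.card V) = Finset.univ := by
  by_cases hstab : ∃ m < Fintype.card V, accum G τ D (m + 1) = accum G τ D m
  · obtain ⟨m, hm, hstab⟩ := hstab
    -- show accum m = univ
    have huniv : accum G τ D m = Finset.univ := by
      by_contra hne
      set K : Finset V := Finset.univ \ accum G τ D m with hKdef
      have hKne : K.Nonempty := by
        rw [Finset.sdiff_nonempty]
        intro hsub
        exact hne (Finset.univ_subset_iff.mp hsub)
      have hKsub : K ⊆ Finset.univ \ D := by
        apply Finset.sdiff_subset_sdiff (Finset.Subset.refl _)
        exact accum_mono (Nat.zero_le m)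
      refine h K hKsub hKne ?_
      intro v hvK
      have hvnot : v ∉ accum G τ D m := (Finset.mem_sdiff.mp hvK).2
      have hvnot' : v ∉ accum G τ D (m + 1) := by rwa [hstab]
      have hτ : ((accum G τ D m).filter (G.Adj v)).card < τ v := by
        by_contra hle
        push_neg at hle
        exact hvnot' (Finset.mem_union_right _ (Finset.mem_filter.mpr ⟨Finset.mem_univ v, hle⟩))
      -- degree v ≤ nbrs in accum m + nbrs in K
      have hdeg : G.degree v ≤ ((accum G τ D m).filter (G.Adj v)).card
          + (K.filter (G.Adj v)).card := by
        rw [← Finset.card_union_of_disjoint]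
        · apply Finset.card_le_card
          intro x hx
          have hadj : G.Adj v x := (SimpleGraph.mem_neighborFinset G v x).mp hx
          by_cases hxm : x ∈ accum G τ D m
          · exact Finset.mem_union_left _ (Finset.mem_filter.mpr ⟨hxm, hadj⟩)
          · exact Finset.mem_union_right _ (Finset.mem_filter.mpr
              ⟨Finset.mem_sdiff.mpr ⟨Finset.mem_univ x, hxm⟩, hadj⟩)
        · rw [Finset.disjoint_left]
          intro x hx1 hx2
          exact (Finset.mem_sdiff.mp (Finset.mem_filter.mp hx2).1).2 (Finset.mem_filter.mp hx1).1
      omega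
    exact Finset.univ_subset_iff.mp (huniv ▸ accum_mono (Nat.le_of_lt hm))
  · push_neg at hstab
    have := accum_card hstab
    refine Finset.eq_univ_of_card _ (le_antisymm (Finset.card_le_univ _) ?_)
    simpa using this

/-- The layers of activation. -/
noncomputable def layer (G : SimpleGraph V) (τ : V → ℕ) (D : Finset V) : ℕ → Finset V
  | 0 => D
  | n + 1 => accum G τ D (n + 1) \ accum G τ D n

lemma layer_subset (i : ℕ) : layer G τ D i ⊆ accum G τ D i := by
  cases i with
  | zero => exact Finset.Subset.refl _
  | succ n => exact Finset.sdiff_subset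

lemma biUnion_layer (n : ℕ) :
    (Finset.range (n + 1)).biUnion (layer G τ D) = accum G τ D n := by
  induction n with
  | zero => simp [layer, accum]
  | succ n ih =>
    rw [Finset.range_add_one, Finset.biUnion_insert, ih]
    show (accum G τ D (n + 1) \ accum G τ D n) ∪ accum G τ D n = accum G τ D (n + 1)
    rw [Finset.sdiff_union_self_eq_union]
    exact Finset.union_eq_left.mpr (accum_subset_succ n)

end Stmt7Aux

open Stmt7Aux in
/-- D is a τ-dynamic monopoly of G iff G ∖ D contains no nonempty
τ-resistant subgraph. -/
theorem stmt7 {V : Type*} [Fintype V] (G : SimpleGraph V) (τ : V → ℕ) (D : Finset V) :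
    IsDynamo G τ D ↔
      ∀ K : Finset V, K ⊆ Finset.univ \ D → K.Nonempty → ¬ IsResistant G τ K := by
  constructor
  · rintro ⟨k, f, hf0, huniq, hiff⟩ K hK ⟨v0, hv0⟩ hres
    choose idx h1 h2 using fun w : V => huniq w
    obtain ⟨v, hvK, hvmin⟩ := K.exists_min_image idx ⟨v0, hv0⟩
    have hvD : v ∉ D := (Finset.mem_sdiff.mp (hK hvK)).2
    have hpos : 1 ≤ idx v := by
      by_contra h0
      push_neg at h0
      have h0' : idx v = 0 := by omega
      have hv0' : v ∈ f 0 := h0' ▸ (h1 v).2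
      rw [hf0] at hv0'
      exact hvD hv0'
    obtain ⟨hnotB, hτ⟩ := (hiff (idx v) hpos (h1 v).1 v).mp (h1 v).2
    set B := (Finset.range (idx v)).biUnion f with hB
    have hKB : ∀ w ∈ K, w ∉ B := by
      intro w hw hwB
      obtain ⟨j, hj, hwj⟩ := Finset.mem_biUnion.mp hwB
      rw [Finset.mem_range] at hj
      have hjk : j ≤ k := le_trans (Nat.le_of_lt hj) (h1 v).1
      have : j = idx w := h2 w j ⟨hjk, hwj⟩
      have := hvmin w hw
      omega
    have hdisj : Disjoint (K.filter (G.Adj v)) (B.filter (G.Adj v)) := by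
      rw [Finset.disjoint_left]
      intro x hx1 hx2
      exact hKB x (Finset.mem_filter.mp hx1).1 (Finset.mem_filter.mp hx2).1
    have hsub : K.filter (G.Adj v) ∪ B.filter (G.Adj v) ⊆ G.neighborFinset v := by
      intro x hx
      rw [SimpleGraph.mem_neighborFinset]
      rcases Finset.mem_union.mp hx with hx | hx
      · exact (Finset.mem_filter.mp hx).2
      · exact (Finset.mem_filter.mp hx).2
    have hcard := Finset.card_le_card hsub
    rw [Finset.card_union_of_disjoint hdisj] at hcard
    have hres' := hres v hvK
    rw [← SimpleGraph.card_neighborFinset_eq_degree] at hres'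
    omega
  · intro h
    refine ⟨Fintype.card V, layer G τ D, rfl, ?_, ?_⟩
    · intro v
      have hv : v ∈ accum G τ D (Fintype.card V) := by
        rw [accum_univ h]; exact Finset.mem_univ v
      have hex : ∃ n, v ∈ accum G τ D n := ⟨_, hv⟩
      classical
      let n := Nat.find hex
      have hn : v ∈ accum G τ D n := Nat.find_spec hex
      have hnk : n ≤ Fintype.card V := Nat.find_le hv
      have hvl : v ∈ layer G τ D n := by
        cases hn' : n with
        | zero => rw [hn'] at hn; exact hn
        | succ m =>
          rw [hn'] at hn
          refine Finset.mem_sdiff.mpr ⟨hn, ?_⟩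
          have := Nat.find_min hex (m := m) (by omega)
          exact this
      refine ⟨n, ⟨hnk, hvl⟩, ?_⟩
      rintro j ⟨hjk, hvj⟩
      by_contra hne
      rcases Nat.lt_or_ge j n with hlt | hge
      · -- v ∈ layer j ⊆ accum j with j < n contradicts minimality
        exact Nat.find_min hex hlt (accum_mono (le_refl j) (layer_subset j hvj))
      · have hgt : n < j := lt_of_le_of_ne hge (Ne.symm hne)
        obtain ⟨m, rfl⟩ : ∃ m, j = m + 1 := ⟨j - 1, by omega⟩
        have hvnm : v ∉ accum G τ D m := (Finset.mem_sdiff.mp hvj).2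
        exact hvnm (accum_mono (by omega : n ≤ m) hn)
    · intro i hi1 hik v
      obtain ⟨m, rfl⟩ : ∃ m, i = m + 1 := ⟨i - 1, by omega⟩
      rw [biUnion_layer]
      constructor
      · intro hv
        have hv' := Finset.mem_sdiff.mp hv
        refine ⟨hv'.2, ?_⟩
        have := hv'.1
        rw [accum] at this
        rcases Finset.mem_union.mp this with h' | h'
        · exact absurd h' hv'.2
        · exact (Finset.mem_filter.mp h').2
      · rintro ⟨hv1, hv2⟩
        refine Finset.mem_sdiff.mpr ⟨?_, hv1⟩
        rw [accum]
        exact Finset.mem_union_right _ (Finset.mem_filter.mpr ⟨Finset.mem_univ v, hv2⟩)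
end

section
/- Let G be a finite simple graph with threshold assignment τ, and suppose K₁, …, K_m are pairwise vertex-disjoint nonempty τ-resistant subgraphs of G. Then every τ-dynamic monopoly of G intersects the vertex set of each K_j, and consequently dyn_τ(G) ≥ m. -/
open Finset

open scoped Classical

variable {V : Type*}

/-- if K₁, …, K_m are pairwise vertex-disjoint nonempty τ-resistant
subgraphs of G, then every τ-dynamic monopoly meets each K_j, hence dyn_τ(G) ≥ m. -/
theorem stmt8 {V : Type*} [Fintype V] (G : SimpleGraph V) (τ : V → ℕ)
    (m : ℕ) (K : Fin m → Finset V)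
    (hdisj : ∀ i j, i ≠ j → Disjoint (K i) (K j))
    (hne : ∀ i, (K i).Nonempty)
    (hres : ∀ i, IsResistant G τ (K i)) :
    (∀ D : Finset V, IsDynamo G τ D → ∀ i, (D ∩ K i).Nonempty) ∧
    m ≤ dynMin G τ := by
  have main : ∀ D : Finset V, IsDynamo G τ D → ∀ i, (D ∩ K i).Nonempty := by
    intro D hD i0
    obtain ⟨k, f, hf0, huniq, hstep⟩ := hD
    by_contra hcon
    have hempty : ∀ v ∈ K i0, v ∉ D := by
      intro v hv hvD
      exact hcon ⟨v, Finset.mem_inter.2 ⟨hvD, hv⟩⟩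
    have hP : ∃ n, ∃ v ∈ K i0, n ≤ k ∧ v ∈ f n := by
      obtain ⟨v, hv⟩ := hne i0
      obtain ⟨n, ⟨hn, hvn⟩, _⟩ := huniq v
      exact ⟨n, v, hv, hn, hvn⟩
    set n := Nat.find hP with hn
    obtain ⟨v, hvK, hnk, hvf⟩ := Nat.find_spec hP
    have hn1 : 1 ≤ n := by
      rcases Nat.eq_zero_or_pos n with h0 | h
      · exact absurd (by rw [← hf0, ← h0]; exact hvf) (hempty v hvK)
      · exact h
    obtain ⟨hnot, hcard⟩ := (hstep n hn1 hnk v).1 hvf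
    have hclaim : ∀ w ∈ K i0, w ∉ (Finset.range n).biUnion f := by
      intro w hw hmem
      obtain ⟨j, hj, hwj⟩ := Finset.mem_biUnion.1 hmem
      have hj' := Finset.mem_range.1 hj
      exact Nat.find_min hP hj' ⟨w, hw, le_trans (le_of_lt hj') hnk, hwj⟩
    have hdisj2 : Disjoint (((Finset.range n).biUnion f).filter (G.Adj v))
        ((K i0).filter (G.Adj v)) := by
      rw [Finset.disjoint_left]
      intro w hw1 hw2
      exact hclaim w (Finset.mem_filter.1 hw2).1 (Finset.mem_filter.1 hw1).1
    have hsub : (((Finset.range n).biUnion f).filter (G.Adj v)) ∪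
        ((K i0).filter (G.Adj v)) ⊆ G.neighborFinset v := by
      intro w hw
      rw [SimpleGraph.mem_neighborFinset]
      rcases Finset.mem_union.1 hw with h | h
      · exact (Finset.mem_filter.1 h).2
      · exact (Finset.mem_filter.1 h).2
    have hle : (((Finset.range n).biUnion f).filter (G.Adj v)).card +
        ((K i0).filter (G.Adj v)).card ≤ G.degree v := by
      rw [← Finset.card_union_of_disjoint hdisj2]
      rw [SimpleGraph.degree]
      exact Finset.card_le_card hsub
    have hres' := hres i0 v hvK
    omega
  refine ⟨main, ?_⟩
  have hne' : {n | ∃ D : Finset V, IsDynamo G τ D ∧ D.card = n}.Nonempty := by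
    refine ⟨(Finset.univ : Finset V).card, Finset.univ, ?_, rfl⟩
    refine ⟨0, fun i => match i with | 0 => Finset.univ | _ => ∅, rfl, ?_, ?_⟩
    · intro v
      refine ⟨0, ⟨le_refl 0, Finset.mem_univ v⟩, ?_⟩
      rintro j ⟨hj, _⟩
      omega
    · intro i h1 h0 v; omega
  have hmem := Nat.sInf_mem hne'
  obtain ⟨D, hD, hc⟩ := hmem
  have : dynMin G τ = D.card := by rw [dynMin, hc]
  rw [this]
  have hfun : ∀ i : Fin m, ∃ v, v ∈ D ∩ K i := fun i => main D hD i
  choose g hg using hfun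
  have hinj : Function.Injective g := by
    intro i j hij
    by_contra hne2
    have hd := hdisj i j hne2
    rw [Finset.disjoint_left] at hd
    exact hd (Finset.mem_inter.1 (hg i)).2 (hij ▸ (Finset.mem_inter.1 (hg j)).2)
  calc m = (Finset.univ : Finset (Fin m)).card := by simp
    _ ≤ D.card := Finset.card_le_card_of_injOn g
        (fun i _ => (Finset.mem_inter.1 (hg i)).1) hinj.injOn
end

section
/- Let G be a finite simple graph with threshold assignment τ, let H be a triangle-free τ-resistant subgraph of G, and let uv be an edge of H. Then Σ_{w∈V(H)} τ(w) ≥ deg_G(u) + deg_G(v). Consequently, the threshold assignment τ' defined by τ'(w) = τ(w) for w ∉ V(H), τ'(w) = 0 for w ∈ V(H) ∖ {u, v}, τ'(u) = deg_G(u) and τ'(v) = deg_G(v), satisfies τ̄' ≤ τ̄. -/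
open Finset

open scoped Classical

variable {V : Type*}

/-- if H is a triangle-free τ-resistant subgraph of G and uv is an edge of
H, then ∑_{w∈H} τ(w) ≥ deg_G(u) + deg_G(v); consequently the assignment τ' which equals
deg_G on u and v, is 0 on the rest of H and agrees with τ off H has τ̄' ≤ τ̄. -/
theorem stmt9 {V : Type*} [Fintype V] [DecidableEq V] (G : SimpleGraph V) (τ : V → ℕ)
    (H : Finset V) (hres : IsResistant G τ H)
    (htf : ∀ a ∈ H, ∀ b ∈ H, ∀ c ∈ H, G.Adj a b → G.Adj b c → G.Adj a c → False)
    (u v : V) (hu : u ∈ H) (hv : v ∈ H) (huv : G.Adj u v)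
    (τ' : V → ℕ)
    (hτ' : τ' = fun w =>
      if w = u then G.degree u else if w = v then G.degree v
      else if w ∈ H then 0 else τ w) :
    G.degree u + G.degree v ≤ ∑ w ∈ H, τ w ∧
    (∑ w, (τ' w : ℝ)) / (Fintype.card V) ≤ (∑ w, (τ w : ℝ)) / (Fintype.card V) := by

  classical
  have hne : u ≠ v := huv.ne
  -- every vertex of H has τ ≥ 1
  have hτ1 : ∀ w ∈ H, 1 ≤ τ w := by
    intro w hw
    have h1 := hres w hw
    have h2 : (H.filter (G.Adj w)).card ≤ G.degree w := by
      rw [← SimpleGraph.card_neighborFinset_eq_degree]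
      apply Finset.card_le_card
      intro x hx
      simp only [Finset.mem_filter] at hx
      simpa [SimpleGraph.mem_neighborFinset] using hx.2
    omega
  set A := H.filter (G.Adj u) with hA
  set B := H.filter (G.Adj v) with hB
  have hdisj : Disjoint A B := by
    rw [Finset.disjoint_left]
    intro w hwA hwB
    simp only [hA, hB, Finset.mem_filter] at hwA hwB
    exact htf u hu v hv w hwA.1 huv hwB.2 hwA.2
  have hcard : A.card + B.card = (A ∪ B).card := (Finset.card_union_of_disjoint hdisj).symm
  have hu' : u ∈ A ∪ B := by
    simp [hA, hB, Finset.mem_union, Finset.mem_filter, hu, huv.symm]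
  have hv' : v ∈ A ∪ B := by
    simp [hA, hB, Finset.mem_union, Finset.mem_filter, hv, huv]
  have hsubuv : ({u, v} : Finset V) ⊆ A ∪ B := by
    intro x hx
    rcases Finset.mem_insert.1 hx with rfl | hx
    · exact hu'
    · rcases Finset.mem_singleton.1 hx with rfl; exact hv'
  have hcarduv : ((A ∪ B) \ {u, v}).card + 2 = (A ∪ B).card := by
    have h1 := Finset.card_sdiff_add_card_eq_card hsubuv
    have h2 : ({u, v} : Finset V).card = 2 := Finset.card_pair hne
    omega
  have hAB : A ∪ B ⊆ H := by
    intro x hx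
    rcases Finset.mem_union.1 hx with hx | hx <;>
      simp only [hA, hB, Finset.mem_filter] at hx <;> exact hx.1
  have hsub2 : (A ∪ B) \ {u, v} ⊆ H \ {u, v} := fun x hx => by
    rcases Finset.mem_sdiff.1 hx with ⟨h1, h2⟩
    exact Finset.mem_sdiff.2 ⟨hAB h1, h2⟩
  have hsum1 : ((A ∪ B) \ {u, v}).card ≤ ∑ w ∈ H \ {u, v}, τ w := by
    calc ((A ∪ B) \ {u, v}).card ≤ (H \ {u, v}).card := Finset.card_le_card hsub2
    _ = ∑ w ∈ H \ {u, v}, 1 := by simp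
    _ ≤ ∑ w ∈ H \ {u, v}, τ w :=
        Finset.sum_le_sum fun w hw => hτ1 w (Finset.mem_sdiff.1 hw).1
  have hsplit : ∑ w ∈ H, τ w = τ u + τ v + ∑ w ∈ H \ {u, v}, τ w := by
    have hsub : ({u, v} : Finset V) ⊆ H := by
      intro x hx
      rcases Finset.mem_insert.1 hx with rfl | hx
      · exact hu
      · rcases Finset.mem_singleton.1 hx with rfl; exact hv
    rw [← Finset.sum_sdiff hsub, Finset.sum_pair hne]
    ring
  have hru := hres u hu
  have hrv := hres v hv
  have main : G.degree u + G.degree v ≤ ∑ w ∈ H, τ w := by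
    have : G.degree u + 1 ≤ A.card + τ u := hru
    have : G.degree v + 1 ≤ B.card + τ v := hrv
    omega
  refine ⟨main, ?_⟩
  have hcardpos : (0 : ℝ) < Fintype.card V := by
    have : 0 < Fintype.card V := Fintype.card_pos_iff.2 ⟨u⟩
    exact_mod_cast this
  have hsum' : ∑ w, τ' w ≤ ∑ w, τ w := by
    rw [← Finset.sum_sdiff (Finset.subset_univ H) (f := τ'),
        ← Finset.sum_sdiff (Finset.subset_univ H) (f := τ)]
    have heq : ∑ w ∈ Finset.univ \ H, τ' w = ∑ w ∈ Finset.univ \ H, τ w := by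
      apply Finset.sum_congr rfl
      intro w hw
      have hwH : w ∉ H := (Finset.mem_sdiff.1 hw).2
      have hwu : w ≠ u := fun h => hwH (h ▸ hu)
      have hwv : w ≠ v := fun h => hwH (h ▸ hv)
      simp [hτ', hwu, hwv, hwH]
    have hH' : ∑ w ∈ H, τ' w = G.degree u + G.degree v := by
      have hsubH : ({u, v} : Finset V) ⊆ H := by
        intro x hx
        rcases Finset.mem_insert.1 hx with rfl | hx
        · exact hu
        · rcases Finset.mem_singleton.1 hx with rfl; exact hv
      rw [← Finset.sum_sdiff hsubH, Finset.sum_pair hne]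
      have hz : ∑ w ∈ H \ {u, v}, τ' w = 0 := by
        apply Finset.sum_eq_zero
        intro w hw
        rcases Finset.mem_sdiff.1 hw with ⟨hwH, hwuv⟩
        have hwu : w ≠ u := fun h => hwuv (by simp [h])
        have hwv : w ≠ v := fun h => hwuv (by simp [h])
        simp [hτ', hwu, hwv, hwH]
      rw [hz]
      simp [hτ', hne, Ne.symm hne]
    rw [heq]
    have hle : ∑ w ∈ H, τ' w ≤ ∑ w ∈ H, τ w := hH' ▸ main
    omega
  have hcast : (∑ w, (τ' w : ℝ)) ≤ ∑ w, (τ w : ℝ) := by exact_mod_cast hsum'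
  gcongr
end

section
/- Let G be a finite simple graph and τ a (zero,degree)-assignment for G, and let G₁ be the subgraph of G induced on the vertex set {v ∈ V(G) : τ(v) = deg_G(v) > 0}. Then a set is a minimum vertex cover of G₁ if and only if it is a minimum τ-dynamic monopoly of G; in particular dyn_τ(G) equals the minimum size of a vertex cover of G₁. -/
open Finset

open scoped Classical

variable {V : Type*}

lemma dynamo_of_cover [Fintype V] (G : SimpleGraph V) (τ : V → ℕ)
    (hzd : ∀ v, τ v = 0 ∨ τ v = G.degree v) (C : Finset V)
    (hcov : ∀ u v, τ u = G.degree u → τ v = G.degree v → G.Adj u v → u ∈ C ∨ v ∈ C) :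
    IsDynamo G τ C := by
  classical
  set A : Finset V := univ.filter (fun v => v ∉ C ∧ τ v ≤ ((C.filter (G.Adj v)).card)) with hA
  set B : Finset V := univ \ (C ∪ A) with hB
  set f : ℕ → Finset V := fun i => if i = 0 then C else if i = 1 then A else if i = 2 then B else ∅ with hf
  have hf0 : f 0 = C := rfl
  have hf1 : f 1 = A := rfl
  have hf2 : f 2 = B := rfl
  have hbi1 : (Finset.range 1).biUnion f = C := by
    rw [Finset.range_one, Finset.singleton_biUnion, hf0]
  have hbi2 : (Finset.range 2).biUnion f = C ∪ A := by
    ext x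
    simp only [Finset.mem_biUnion, Finset.mem_range, Finset.mem_union]
    constructor
    · rintro ⟨i, hi, hx⟩
      interval_cases i
      · left; exact hx
      · right; exact hx
    · rintro (h | h)
      · exact ⟨0, by omega, h⟩
      · exact ⟨1, by omega, h⟩
  have hmemA : ∀ v, v ∈ A ↔ v ∉ C ∧ τ v ≤ ((C.filter (G.Adj v)).card) := by
    intro v; simp [hA]
  have hmemB : ∀ v, v ∈ B ↔ v ∉ C ∪ A := by
    intro v; simp [hB]
  -- key claim
  have key : ∀ v, v ∉ C → v ∉ A → τ v ≤ (((C ∪ A).filter (G.Adj v)).card) := by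
    intro v hvC hvA
    have h1 : ¬ (τ v ≤ ((C.filter (G.Adj v)).card)) := by
      intro h; exact hvA ((hmemA v).2 ⟨hvC, h⟩)
    have hτv : τ v = G.degree v := by
      rcases hzd v with h | h
      · exact absurd (h ▸ Nat.zero_le _) h1
      · exact h
    have hsub : G.neighborFinset v ⊆ (C ∪ A).filter (G.Adj v) := by
      intro u hu
      rw [SimpleGraph.mem_neighborFinset] at hu
      rw [Finset.mem_filter]
      refine ⟨?_, hu⟩
      rw [Finset.mem_union]
      by_cases huC : u ∈ C
      · left; exact huC
      · right
        rcases hzd u with h0 | hd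
        · exact (hmemA u).2 ⟨huC, h0 ▸ Nat.zero_le _⟩
        · rcases hcov u v hd hτv hu.symm with h | h
          · exact absurd h huC
          · exact absurd h hvC
    calc τ v = (G.neighborFinset v).card := hτv
      _ ≤ _ := Finset.card_le_card hsub
  refine ⟨2, f, hf0, ?_, ?_⟩
  · intro v
    by_cases hvC : v ∈ C
    · refine ⟨0, ⟨by omega, hvC⟩, ?_⟩
      rintro y ⟨hy2, hvy⟩
      interval_cases y
      · rfl
      · exact absurd ((hmemA v).1 hvy).1 (not_not.2 hvC)
      · exact absurd (Finset.mem_union_left A hvC) ((hmemB v).1 hvy)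
    · by_cases hvA : v ∈ A
      · refine ⟨1, ⟨by omega, hvA⟩, ?_⟩
        rintro y ⟨hy2, hvy⟩
        interval_cases y
        · exact absurd hvy hvC
        · rfl
        · exact absurd (Finset.mem_union_right C hvA) ((hmemB v).1 hvy)
      · refine ⟨2, ⟨le_refl 2, (hmemB v).2 (by simp [Finset.mem_union, hvC, hvA])⟩, ?_⟩
        rintro y ⟨hy2, hvy⟩
        interval_cases y
        · exact absurd hvy hvC
        · exact absurd hvy hvA
        · rfl
  · intro i hi1 hi2 v
    interval_cases i
    · rw [hbi1, hf1, hmemA]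
    · rw [hbi2, hf2, hmemB]
      constructor
      · intro h
        rw [Finset.mem_union] at h
        push_neg at h
        refine ⟨by simp [Finset.mem_union, h.1, h.2], key v h.1 h.2⟩
      · intro h
        exact h.1

lemma cover_of_dynamo [Fintype V] (G : SimpleGraph V) (τ : V → ℕ) (D : Finset V)
    (hD : IsDynamo G τ D) :
    ∀ u v, τ u = G.degree u → τ v = G.degree v → G.Adj u v → u ∈ D ∨ v ∈ D := by
  classical
  obtain ⟨k, f, hf0, huniq, hstep⟩ := hD
  have claim : ∀ (u v : V) (i j : ℕ), τ u = G.degree u → G.Adj u v → 1 ≤ i → i ≤ k →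
      u ∈ f i → j ≤ k → v ∈ f j → i ≤ j → False := by
    intro u v i j hτu hadj hi1 hik hui hjk hvj hij
    have hcond := ((hstep i hi1 hik u).1 hui).2
    have hsub : ((Finset.range i).biUnion f).filter (G.Adj u) ⊆ G.neighborFinset u := by
      intro x hx
      rw [Finset.mem_filter] at hx
      rw [SimpleGraph.mem_neighborFinset]
      exact hx.2
    have hcard : (G.neighborFinset u).card ≤ (((Finset.range i).biUnion f).filter (G.Adj u)).card := by
      rw [← SimpleGraph.card_neighborFinset_eq_degree] at hτu
      omega
    have heq := Finset.eq_of_subset_of_card_le hsub hcard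
    have hv : v ∈ ((Finset.range i).biUnion f).filter (G.Adj u) := by
      rw [heq, SimpleGraph.mem_neighborFinset]; exact hadj
    rw [Finset.mem_filter, Finset.mem_biUnion] at hv
    obtain ⟨⟨l, hl, hvl⟩, _⟩ := hv
    rw [Finset.mem_range] at hl
    obtain ⟨w, _, hwuniq⟩ := huniq v
    have h1 : l = w := hwuniq l ⟨by omega, hvl⟩
    have h2 : j = w := hwuniq j ⟨hjk, hvj⟩
    omega
  intro u v hτu hτv hadj
  by_contra h
  push_neg at h
  obtain ⟨huD, hvD⟩ := h
  obtain ⟨i, ⟨hik, hui⟩, _⟩ := huniq u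
  obtain ⟨j, ⟨hjk, hvj⟩, _⟩ := huniq v
  have hi0 : i ≠ 0 := fun h => huD (by subst h; rwa [hf0] at hui)
  have hj0 : j ≠ 0 := fun h => hvD (by subst h; rwa [hf0] at hvj)
  rcases le_total i j with h | h
  · exact claim u v i j hτu hadj (by omega) hik hui hjk hvj h
  · exact claim v u j i hτv hadj.symm (by omega) hjk hvj hik hui h

/-- for a (zero,degree)-assignment τ, with G₁ the subgraph of G induced on
S = {v : τ(v) = deg_G(v)}, a set is a minimum vertex cover of G₁ iff it is a minimum
τ-dynamic monopoly of G; in particular dyn_τ(G) equals the minimum size of a vertex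
cover of G₁. -/
theorem stmt10 {V : Type*} [Fintype V] (G : SimpleGraph V) (τ : V → ℕ)
    (hzd : ∀ v, τ v = 0 ∨ τ v = G.degree v)
    (S : Finset V) (hS : S = Finset.univ.filter (fun v => τ v = G.degree v)) :
    (∀ C : Finset V,
      (C ⊆ S ∧ (∀ u ∈ S, ∀ v ∈ S, G.Adj u v → u ∈ C ∨ v ∈ C) ∧
        (∀ C' : Finset V, C' ⊆ S → (∀ u ∈ S, ∀ v ∈ S, G.Adj u v → u ∈ C' ∨ v ∈ C') →
          C.card ≤ C'.card)) ↔
      (IsDynamo G τ C ∧ ∀ D : Finset V, IsDynamo G τ D → C.card ≤ D.card)) ∧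
    dynMin G τ =
      sInf {n | ∃ C : Finset V, C ⊆ S ∧
        (∀ u ∈ S, ∀ v ∈ S, G.Adj u v → u ∈ C ∨ v ∈ C) ∧ C.card = n} := by
  have hmemS : ∀ v, v ∈ S ↔ τ v = G.degree v := by intro v; simp [hS]
  have hdyn_of_cov : ∀ C : Finset V,
      (∀ u ∈ S, ∀ v ∈ S, G.Adj u v → u ∈ C ∨ v ∈ C) → IsDynamo G τ C := by
    intro C h
    exact dynamo_of_cover G τ hzd C
      (fun u v hu hv => h u ((hmemS u).2 hu) v ((hmemS v).2 hv))
  have hinter : ∀ D : Finset V, IsDynamo G τ D →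
      (D ∩ S ⊆ S ∧ (∀ u ∈ S, ∀ v ∈ S, G.Adj u v → u ∈ D ∩ S ∨ v ∈ D ∩ S)) := by
    intro D hD
    refine ⟨Finset.inter_subset_right, ?_⟩
    intro u hu v hv hadj
    rcases cover_of_dynamo G τ D hD u v ((hmemS u).1 hu) ((hmemS v).1 hv) hadj with h | h
    · exact Or.inl (Finset.mem_inter.2 ⟨h, hu⟩)
    · exact Or.inr (Finset.mem_inter.2 ⟨h, hv⟩)
  constructor
  · intro C
    constructor
    · rintro ⟨hCS, hCcov, hCmin⟩
      refine ⟨hdyn_of_cov C hCcov, ?_⟩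
      intro D hD
      obtain ⟨h1, h2⟩ := hinter D hD
      calc C.card ≤ (D ∩ S).card := hCmin _ h1 h2
        _ ≤ D.card := Finset.card_le_card Finset.inter_subset_left
    · rintro ⟨hCdyn, hCmin⟩
      obtain ⟨h1, h2⟩ := hinter C hCdyn
      have hle : C.card ≤ (C ∩ S).card := hCmin _ (hdyn_of_cov _ h2)
      have heq : C ∩ S = C := Finset.eq_of_subset_of_card_le Finset.inter_subset_left hle
      have hCS : C ⊆ S := by rw [← heq]; exact Finset.inter_subset_right
      have hCcov : ∀ u ∈ S, ∀ v ∈ S, G.Adj u v → u ∈ C ∨ v ∈ C := by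
        intro u hu v hv hadj
        rcases h2 u hu v hv hadj with h | h
        · exact Or.inl (Finset.mem_inter.1 h).1
        · exact Or.inr (Finset.mem_inter.1 h).1
      exact ⟨hCS, hCcov, fun C' hC'S hC'cov => hCmin C' (hdyn_of_cov C' hC'cov)⟩
  · have hScov : ∀ u ∈ S, ∀ v ∈ S, G.Adj u v → u ∈ S ∨ v ∈ S :=
      fun u hu v hv _ => Or.inl hu
    have hcovne : {n | ∃ C : Finset V, C ⊆ S ∧
        (∀ u ∈ S, ∀ v ∈ S, G.Adj u v → u ∈ C ∨ v ∈ C) ∧ C.card = n}.Nonempty :=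
      ⟨S.card, S, Finset.Subset.refl S, hScov, rfl⟩
    have hdynne : {n | ∃ D : Finset V, IsDynamo G τ D ∧ D.card = n}.Nonempty :=
      ⟨S.card, S, hdyn_of_cov S hScov, rfl⟩
    apply le_antisymm
    · obtain ⟨C, hC1, hC2, hC3⟩ := Nat.sInf_mem hcovne
      show sInf {n | ∃ D : Finset V, IsDynamo G τ D ∧ D.card = n} ≤ _
      exact Nat.sInf_le ⟨C, hdyn_of_cov C hC2, hC3⟩
    · obtain ⟨D, hD1, hD2⟩ := Nat.sInf_mem hdynne
      obtain ⟨h1, h2⟩ := hinter D hD1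
      show _ ≤ sInf {n | ∃ D : Finset V, IsDynamo G τ D ∧ D.card = n}
      rw [show sInf {n | ∃ D : Finset V, IsDynamo G τ D ∧ D.card = n} = D.card from hD2.symm]
      calc sInf {n | ∃ C : Finset V, C ⊆ S ∧
            (∀ u ∈ S, ∀ v ∈ S, G.Adj u v → u ∈ C ∨ v ∈ C) ∧ C.card = n}
          ≤ (D ∩ S).card := Nat.sInf_le ⟨D ∩ S, h1, h2, rfl⟩
        _ ≤ D.card := Finset.card_le_card Finset.inter_subset_left
end

section
/- Let G be a finite simple graph, let s ≥ 2 and p ≥ 1 be integers. Let H be the graph obtained from G as follows: to each vertex v of G attach a new star K_{1,s−1} whose central vertex is joined to v by an edge; then choose a leaf y of one of these stars and attach a path P with p vertices (p − 1 edges) whose only vertex in the rest of the graph is y (so V(P) includes y). Define the threshold assignment τ by τ(w) = deg_H(w) for w ∈ V(G) ∪ V(P) and τ(w) = 0 otherwise. Then dyn_τ(H) = β(G) + ⌊p/2⌋, where β(G) denotes the minimum size of a vertex cover of G. -/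
open Finset

open scoped Classical

variable {V : Type*}

/-- The graph H built from G: to each vertex `a` of G we attach a star K_{1,s−1} with
center `(a, 0)` (joined to `a`) and leaves `(a, j)`, `j ≠ 0`; the leaf
`y = (v₀, 1)` of the star attached to the chosen vertex `v₀` is the first vertex of an
attached path with p vertices, whose p − 1 further vertices are the `Fin (p − 1)`
summand (path edges: `y — q₀` and `qᵢ — qᵢ₊₁`). -/
def Hgraph {V : Type*} (G : SimpleGraph V) (s p : ℕ) (v₀ : V) :
    SimpleGraph (V ⊕ (V × Fin s) ⊕ Fin (p - 1)) :=
  SimpleGraph.fromRel (fun x y =>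
    match x, y with
    | Sum.inl a, Sum.inl b => G.Adj a b
    | Sum.inl a, Sum.inr (Sum.inl (b, j)) => a = b ∧ j.val = 0
    | Sum.inr (Sum.inl (a, i)), Sum.inr (Sum.inl (b, j)) => a = b ∧ i.val = 0 ∧ j.val ≠ 0
    | Sum.inr (Sum.inl (a, i)), Sum.inr (Sum.inr q) => a = v₀ ∧ i.val = 1 ∧ q.val = 0
    | Sum.inr (Sum.inr q), Sum.inr (Sum.inr q') => q'.val = q.val + 1
    | _, _ => False)

/-- The threshold assignment for H: full degree on the vertices of G and on the vertices
of the path P (including the leaf y = (v₀,1)), and 0 on all other star vertices. -/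
noncomputable def tauH {V : Type*} [Fintype V] [DecidableEq V] (G : SimpleGraph V)
    (s p : ℕ) (v₀ : V) : (V ⊕ (V × Fin s) ⊕ Fin (p - 1)) → ℕ :=
  fun x =>
    match x with
    | Sum.inl _ => (Hgraph G s p v₀).degree x
    | Sum.inr (Sum.inl (a, i)) =>
        if a = v₀ ∧ i.val = 1 then (Hgraph G s p v₀).degree x else 0
    | Sum.inr (Sum.inr _) => (Hgraph G s p v₀).degree x

/-! ### General lemmas about dynamos -/

lemma dynamo_forced_aux {W : Type*} [Fintype W] {H : SimpleGraph W} {τ : W → ℕ}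
    {D : Finset W} (k : ℕ) (f : ℕ → Finset W)
    (h0 : f 0 = D)
    (hrule : ∀ i, 1 ≤ i → i ≤ k → ∀ v : W,
      v ∈ f i ↔ v ∉ (Finset.range i).biUnion f ∧
        τ v ≤ (((Finset.range i).biUnion f).filter (H.Adj v)).card)
    {u v : W} (huv : H.Adj u v) (hu : τ u = H.degree u)
    {iu iv : ℕ} (hiuk : iu ≤ k) (hufu : u ∈ f iu)
    (hvuniq : ∀ j, (j ≤ k ∧ v ∈ f j) → j = iv)
    (hle : iu ≤ iv) : u ∈ D := by
  rcases Nat.eq_zero_or_pos iu with h | h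
  · subst h; rwa [h0] at hufu
  · exfalso
    have := (hrule iu h hiuk u).mp hufu
    set prev := (Finset.range iu).biUnion f with hprev
    have hsub : prev.filter (H.Adj u) ⊆ H.neighborFinset u := by
      intro w hw
      simp only [Finset.mem_filter] at hw
      simpa [SimpleGraph.mem_neighborFinset] using hw.2
    have hcard : (H.neighborFinset u).card ≤ (prev.filter (H.Adj u)).card := by
      have := this.2
      rwa [hu, SimpleGraph.degree] at this
    have heq := Finset.eq_of_subset_of_card_le hsub hcard
    have hvmem : v ∈ prev := by
      have : v ∈ prev.filter (H.Adj u) := by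
        rw [heq]; simpa [SimpleGraph.mem_neighborFinset] using huv
      exact (Finset.mem_filter.mp this).1
    rw [hprev, Finset.mem_biUnion] at hvmem
    obtain ⟨m, hm, hvm⟩ := hvmem
    rw [Finset.mem_range] at hm
    have := hvuniq m ⟨le_trans (le_of_lt hm) hiuk, hvm⟩
    omega

lemma dynamo_forced {W : Type*} [Fintype W] {H : SimpleGraph W} {τ : W → ℕ}
    {D : Finset W} (hD : IsDynamo H τ D) {u v : W} (huv : H.Adj u v)
    (hu : τ u = H.degree u) (hv : τ v = H.degree v) : u ∈ D ∨ v ∈ D := by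
  obtain ⟨k, f, h0, hpart, hrule⟩ := hD
  obtain ⟨iu, ⟨hiuk, hufu⟩, huuniq⟩ := hpart u
  obtain ⟨iv, ⟨hivk, hvfv⟩, hvuniq⟩ := hpart v
  rcases le_total iu iv with hle | hle
  · exact Or.inl (dynamo_forced_aux k f h0 hrule huv hu hiuk hufu
      (fun j hj => hvuniq j hj) hle)
  · exact Or.inr (dynamo_forced_aux k f h0 hrule huv.symm hv hivk hvfv
      (fun j hj => huuniq j hj) hle)

lemma dynamo_of {W : Type*} [Fintype W] (H : SimpleGraph W) (τ : W → ℕ) (D : Finset W)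
    (h1 : ∀ v, v ∉ D → τ v ≤ H.degree v)
    (h2 : ∀ v w, H.Adj v w → v ∉ D → w ∉ D → τ v = 0 ∨ τ w = 0) :
    IsDynamo H τ D := by
  classical
  set F1 : Finset W := (univ \ D).filter (fun v => τ v ≤ (D.filter (H.Adj v)).card) with hF1
  set F2 : Finset W := univ \ (D ∪ F1) with hF2
  refine ⟨2, (fun i => if i = 0 then D else if i = 1 then F1 else if i = 2 then F2 else ∅),
    rfl, ?_, ?_⟩
  · intro v
    have m1 : ∀ w, w ∈ F1 → w ∉ D := by
      intro w hw
      exact (Finset.mem_sdiff.mp (Finset.mem_filter.mp hw).1).2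
    have m2 : ∀ w, w ∈ F2 → w ∉ D ∧ w ∉ F1 := by
      intro w hw
      have := (Finset.mem_sdiff.mp hw).2
      rw [Finset.mem_union] at this
      exact ⟨fun h => this (Or.inl h), fun h => this (Or.inr h)⟩
    by_cases hvD : v ∈ D
    · refine ⟨0, ⟨by omega, hvD⟩, ?_⟩
      rintro j ⟨hj, hvj⟩
      interval_cases j
      · rfl
      · exact absurd hvD (m1 v hvj)
      · exact absurd hvD (m2 v hvj).1
    · by_cases hv1 : v ∈ F1
      · refine ⟨1, ⟨by omega, hv1⟩, ?_⟩
        rintro j ⟨hj, hvj⟩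
        interval_cases j
        · exact absurd hvj hvD
        · rfl
        · exact absurd hv1 (m2 v hvj).2
      · have hv2 : v ∈ F2 := by
          rw [hF2, Finset.mem_sdiff, Finset.mem_union]
          exact ⟨Finset.mem_univ v, fun h => h.elim hvD hv1⟩
        refine ⟨2, ⟨le_refl 2, hv2⟩, ?_⟩
        rintro j ⟨hj, hvj⟩
        interval_cases j
        · exact absurd hvj hvD
        · exact absurd hvj hv1
        · rfl
  · set f : ℕ → Finset W := (fun i => if i = 0 then D else if i = 1 then F1 else
      if i = 2 then F2 else ∅) with hf
    have hr1 : (Finset.range 1).biUnion f = D := by simp [hf]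
    have hr2 : (Finset.range 2).biUnion f = D ∪ F1 := by
      rw [show (2:ℕ) = 1+1 from rfl, Finset.range_add_one, Finset.biUnion_insert, hr1]
      simp [hf, Finset.union_comm]
    intro i hi1 hik v
    interval_cases i
    · rw [hr1]
      show v ∈ F1 ↔ _
      rw [hF1, Finset.mem_filter, Finset.mem_sdiff]
      simp only [Finset.mem_univ, true_and]
    · rw [hr2]
      show v ∈ F2 ↔ _
      rw [hF2, Finset.mem_sdiff]
      simp only [Finset.mem_univ, true_and]
      constructor
      · intro hv
        refine ⟨hv, ?_⟩
        have hvD : v ∉ D := fun h => hv (Finset.mem_union_left _ h)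
        have hvF1 : v ∉ F1 := fun h => hv (Finset.mem_union_right _ h)
        have hτ : τ v ≠ 0 := by
          intro h0
          refine hvF1 ?_
          rw [hF1, Finset.mem_filter, Finset.mem_sdiff, h0]
          exact ⟨⟨Finset.mem_univ v, hvD⟩, Nat.zero_le _⟩
        have hnb : H.neighborFinset v ⊆ (D ∪ F1).filter (H.Adj v) := by
          intro w hw
          rw [SimpleGraph.mem_neighborFinset] at hw
          refine Finset.mem_filter.mpr ⟨?_, hw⟩
          by_cases hwD : w ∈ D
          · exact Finset.mem_union_left _ hwD
          · rcases h2 v w hw hvD hwD with h | h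
            · exact absurd h hτ
            · refine Finset.mem_union_right _ ?_
              rw [hF1, Finset.mem_filter, Finset.mem_sdiff, h]
              exact ⟨⟨Finset.mem_univ w, hwD⟩, Nat.zero_le _⟩
        calc τ v ≤ H.degree v := h1 v hvD
          _ ≤ ((D ∪ F1).filter (H.Adj v)).card := by
              rw [SimpleGraph.degree]; exact Finset.card_le_card hnb
      · exact fun h => h.1

/-! ### Specific facts about `Hgraph` and `tauH` -/

section Specific

variable [Fintype V] [DecidableEq V] (G : SimpleGraph V) (s p : ℕ) (v₀ : V)

lemma tauH_le_degree (x : V ⊕ (V × Fin s) ⊕ Fin (p - 1)) :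
    tauH G s p v₀ x ≤ (Hgraph G s p v₀).degree x := by
  rcases x with a | ⟨a, i⟩ | q
  · exact le_of_eq rfl
  · show (if a = v₀ ∧ i.val = 1 then _ else 0) ≤ _
    split
    · exact le_refl _
    · exact Nat.zero_le _
  · exact le_of_eq rfl

lemma tauH_inl (a : V) :
    tauH G s p v₀ (Sum.inl a) = (Hgraph G s p v₀).degree (Sum.inl a) := rfl

lemma tauH_q (q : Fin (p - 1)) :
    tauH G s p v₀ (Sum.inr (Sum.inr q)) =
      (Hgraph G s p v₀).degree (Sum.inr (Sum.inr q)) := rfl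

lemma tauH_y (i : Fin s) (hi : i.val = 1) :
    tauH G s p v₀ (Sum.inr (Sum.inl (v₀, i))) =
      (Hgraph G s p v₀).degree (Sum.inr (Sum.inl (v₀, i))) := by
  show (if v₀ = v₀ ∧ i.val = 1 then _ else 0) = _
  rw [if_pos ⟨rfl, hi⟩]

lemma tauH_star (a : V) (i : Fin s) (h : ¬(a = v₀ ∧ i.val = 1)) :
    tauH G s p v₀ (Sum.inr (Sum.inl (a, i))) = 0 := by
  show (if a = v₀ ∧ i.val = 1 then _ else 0) = 0
  rw [if_neg h]

lemma adj_inl_inl {a b : V} (h : G.Adj a b) :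
    (Hgraph G s p v₀).Adj (Sum.inl a) (Sum.inl b) := by
  simp only [Hgraph, SimpleGraph.fromRel_adj, ne_eq, Sum.inl.injEq]
  refine ⟨fun he => ?_, Or.inl h⟩
  subst he
  exact G.irrefl h

end Specific

section Main

variable [Fintype V] [DecidableEq V]

lemma upper_bound (G : SimpleGraph V) (s p : ℕ) (v₀ : V) (C : Finset V)
    (hC : ∀ u v : V, G.Adj u v → u ∈ C ∨ v ∈ C) :
    ∃ D : Finset (V ⊕ (V × Fin s) ⊕ Fin (p - 1)),
      IsDynamo (Hgraph G s p v₀) (tauH G s p v₀) D ∧ D.card = C.card + p / 2 := by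
  classical
  set qmap : Fin (p / 2) → Fin (p - 1) :=
    (fun j => ⟨2 * j.val, by have := j.2; omega⟩) with hqmap
  set D : Finset (V ⊕ (V × Fin s) ⊕ Fin (p - 1)) :=
    C.image Sum.inl ∪ (univ.image fun j => Sum.inr (Sum.inr (qmap j))) with hD
  have ha_mem : ∀ a ∈ C, (Sum.inl a : V ⊕ (V × Fin s) ⊕ Fin (p - 1)) ∈ D := by
    intro a ha
    exact Finset.mem_union_left _ (Finset.mem_image_of_mem _ ha)
  have hq_mem : ∀ q : Fin (p - 1), q.val % 2 = 0 →
      (Sum.inr (Sum.inr q) : V ⊕ (V × Fin s) ⊕ Fin (p - 1)) ∈ D := by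
    intro q hq
    refine Finset.mem_union_right _ (Finset.mem_image.mpr
      ⟨⟨q.val / 2, by have := q.2; omega⟩, Finset.mem_univ _, ?_⟩)
    have : qmap ⟨q.val / 2, by have := q.2; omega⟩ = q := by
      apply Fin.ext
      show 2 * (q.val / 2) = q.val
      omega
    rw [this]
  refine ⟨D, dynamo_of _ _ _ (fun v _ => tauH_le_degree G s p v₀ v) ?_, ?_⟩
  · intro v w hadj hvD hwD
    rcases v with a | ⟨a, i⟩ | q <;> rcases w with b | ⟨b, j⟩ | q'
    · -- inl a, inl b
      exfalso
      simp only [Hgraph, SimpleGraph.fromRel_adj] at hadj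
      have hab : G.Adj a b := by
        rcases hadj.2 with h | h
        · exact h
        · exact h.symm
      rcases hC a b hab with h | h
      · exact hvD (ha_mem a h)
      · exact hwD (ha_mem b h)
    · -- inl a, star (b, j)
      right
      simp only [Hgraph, SimpleGraph.fromRel_adj] at hadj
      apply tauH_star
      rintro ⟨-, hj1⟩
      rcases hadj.2 with ⟨-, hj0⟩ | h
      · omega
      · exact h
    · -- inl a, path q' : impossible
      exfalso
      simp only [Hgraph, SimpleGraph.fromRel_adj] at hadj
      rcases hadj.2 with h | h <;> exact h
    · -- star (a, i), inl b
      left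
      simp only [Hgraph, SimpleGraph.fromRel_adj] at hadj
      apply tauH_star
      rintro ⟨-, hi1⟩
      rcases hadj.2 with h | ⟨-, hi0⟩
      · exact h
      · omega
    · -- star, star
      simp only [Hgraph, SimpleGraph.fromRel_adj] at hadj
      rcases hadj.2 with ⟨-, hi0, -⟩ | ⟨-, hj0, -⟩
      · left
        apply tauH_star
        rintro ⟨-, hi1⟩
        omega
      · right
        apply tauH_star
        rintro ⟨-, hj1⟩
        omega
    · -- star (a,i), path q' : q'.val = 0, so q' ∈ D, contradiction
      exfalso
      simp only [Hgraph, SimpleGraph.fromRel_adj] at hadj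
      rcases hadj.2 with ⟨-, -, hq0⟩ | h
      · exact hwD (hq_mem q' (by omega))
      · exact h
    · -- path q, inl b : impossible
      exfalso
      simp only [Hgraph, SimpleGraph.fromRel_adj] at hadj
      rcases hadj.2 with h | h <;> exact h
    · -- path q, star (b, j) : q.val = 0, contradiction
      exfalso
      simp only [Hgraph, SimpleGraph.fromRel_adj] at hadj
      rcases hadj.2 with h | ⟨-, -, hq0⟩
      · exact h
      · exact hvD (hq_mem q (by omega))
    · -- path q, path q' : one of them even, contradiction
      exfalso
      simp only [Hgraph, SimpleGraph.fromRel_adj] at hadj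
      have : q.val % 2 = 0 ∨ q'.val % 2 = 0 := by
        rcases hadj.2 with h | h <;> omega
      rcases this with h | h
      · exact hvD (hq_mem q h)
      · exact hwD (hq_mem q' h)
  · -- cardinality
    have hdisj : Disjoint (C.image Sum.inl)
        ((univ : Finset (Fin (p/2))).image fun j =>
          (Sum.inr (Sum.inr (qmap j)) : V ⊕ (V × Fin s) ⊕ Fin (p - 1))) := by
      rw [Finset.disjoint_left]
      rintro x hx1 hx2
      obtain ⟨a, -, rfl⟩ := Finset.mem_image.mp hx1
      obtain ⟨j, -, h⟩ := Finset.mem_image.mp hx2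
      exact absurd h (by simp)
    rw [hD, Finset.card_union_of_disjoint hdisj,
      Finset.card_image_of_injective _ Sum.inl_injective,
      Finset.card_image_of_injective, Finset.card_univ, Fintype.card_fin]
    intro j1 j2 h
    simp only [Sum.inr.injEq] at h
    have : (qmap j1).val = (qmap j2).val := by rw [h]
    apply Fin.ext
    simpa [hqmap] using this

end Main

section Lower

variable [Fintype V] [DecidableEq V]

/-- The `i`-th vertex of the attached path (0-indexed): `pv 0 = y`, `pv (i+1) = qᵢ`. -/
def pv (s p : ℕ) (hs : 2 ≤ s) (v₀ : V) (i : ℕ) : V ⊕ (V × Fin s) ⊕ Fin (p - 1) :=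
  if h : i = 0 ∨ ¬(i - 1 < p - 1) then Sum.inr (Sum.inl (v₀, ⟨1, by omega⟩))
  else Sum.inr (Sum.inr ⟨i - 1, by omega⟩)

omit [Fintype V] [DecidableEq V] in
lemma pv_zero (s p : ℕ) (hs : 2 ≤ s) (v₀ : V) :
    pv s p hs v₀ 0 = Sum.inr (Sum.inl (v₀, ⟨1, by omega⟩)) := dif_pos (Or.inl rfl)

omit [Fintype V] [DecidableEq V] in
lemma pv_succ (s p : ℕ) (hs : 2 ≤ s) (v₀ : V) (i : ℕ) (h0 : i ≠ 0) (h1 : i - 1 < p - 1) :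
    pv s p hs v₀ i = Sum.inr (Sum.inr ⟨i - 1, h1⟩) := by
  rw [pv, dif_neg]
  push_neg
  exact ⟨h0, h1⟩

omit [Fintype V] [DecidableEq V] in
lemma pv_inj (s p : ℕ) (hs : 2 ≤ s) (v₀ : V) (i j : ℕ) (hi : i < p) (hj : j < p)
    (h : pv s p hs v₀ i = pv s p hs v₀ j) : i = j := by
  rcases Nat.eq_zero_or_pos i with hi0 | hi0 <;> rcases Nat.eq_zero_or_pos j with hj0 | hj0
  · omega
  · exfalso
    subst hi0
    rw [pv_zero, pv_succ s p hs v₀ j (by omega) (by omega)] at h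
    simp at h
  · exfalso
    subst hj0
    rw [pv_zero, pv_succ s p hs v₀ i (by omega) (by omega)] at h
    simp at h
  · rw [pv_succ s p hs v₀ i (by omega) (by omega),
      pv_succ s p hs v₀ j (by omega) (by omega)] at h
    simp only [Sum.inr.injEq, Fin.mk.injEq] at h
    omega

omit [Fintype V] in
lemma pv_tau (G : SimpleGraph V) (s p : ℕ) (hs : 2 ≤ s) (v₀ : V) (i : ℕ) (hi : i < p)
    [Fintype V] :
    tauH G s p v₀ (pv s p hs v₀ i) = (Hgraph G s p v₀).degree (pv s p hs v₀ i) := by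
  rcases Nat.eq_zero_or_pos i with hi0 | hi0
  · subst hi0
    rw [pv_zero]
    exact tauH_y G s p v₀ _ rfl
  · rw [pv_succ s p hs v₀ i (by omega) (by omega)]
    exact tauH_q G s p v₀ _

omit [Fintype V] [DecidableEq V] in
lemma pv_adj (G : SimpleGraph V) (s p : ℕ) (hs : 2 ≤ s) (v₀ : V) (j : ℕ)
    (hj : 2 * j + 1 < p) :
    (Hgraph G s p v₀).Adj (pv s p hs v₀ (2 * j)) (pv s p hs v₀ (2 * j + 1)) := by
  rcases Nat.eq_zero_or_pos j with hj0 | hj0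
  · subst hj0
    rw [show 2 * 0 = 0 from rfl, pv_zero, pv_succ s p hs v₀ (2 * 0 + 1) (by omega) (by omega)]
    simp only [Hgraph, SimpleGraph.fromRel_adj]
    exact ⟨by simp, Or.inl (by simp)⟩
  · rw [pv_succ s p hs v₀ (2 * j) (by omega) (by omega),
      pv_succ s p hs v₀ (2 * j + 1) (by omega) (by omega)]
    simp only [Hgraph, SimpleGraph.fromRel_adj]
    constructor
    · simp only [ne_eq, Sum.inr.injEq, Fin.mk.injEq]
      omega
    · left
      show 2 * j + 1 - 1 = 2 * j - 1 + 1
      omega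

lemma lower_bound (G : SimpleGraph V) (s p : ℕ) (hs : 2 ≤ s) (hp : 1 ≤ p) (v₀ : V)
    (D : Finset (V ⊕ (V × Fin s) ⊕ Fin (p - 1)))
    (hD : IsDynamo (Hgraph G s p v₀) (tauH G s p v₀) D) :
    ∃ C : Finset V, (∀ u v : V, G.Adj u v → u ∈ C ∨ v ∈ C) ∧ C.card + p / 2 ≤ D.card := by
  classical
  set C : Finset V := univ.filter (fun a => Sum.inl a ∈ D) with hC
  refine ⟨C, ?_, ?_⟩
  · intro u v huv
    rcases dynamo_forced hD (adj_inl_inl G s p v₀ huv) rfl rfl with h | h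
    · exact Or.inl (by simp [hC, h])
    · exact Or.inr (by simp [hC, h])
  · set S1 : Finset (V ⊕ (V × Fin s) ⊕ Fin (p - 1)) :=
      D.filter (fun x => ∃ a : V, x = Sum.inl a) with hS1
    set S2 : Finset (V ⊕ (V × Fin s) ⊕ Fin (p - 1)) :=
      D.filter (fun x => ∀ a : V, x ≠ Sum.inl a) with hS2
    have hCS1 : C.card ≤ S1.card := by
      apply Finset.card_le_card_of_injOn (fun a => Sum.inl a)
      · intro a ha
        simp only [Finset.mem_coe, hC, Finset.mem_filter] at ha
        rw [Finset.mem_coe, hS1, Finset.mem_filter]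
        exact ⟨ha.2, a, rfl⟩
      · intro a _ b _ h
        exact Sum.inl_injective h
    have hS2card : p / 2 ≤ S2.card := by
      have hlt : ∀ j : Fin (p / 2), 2 * j.val + 1 < p := by
        intro j
        have := j.2
        omega
      set pick : Fin (p / 2) → V ⊕ (V × Fin s) ⊕ Fin (p - 1) :=
        fun j => if pv s p hs v₀ (2 * j.val) ∈ D then pv s p hs v₀ (2 * j.val)
          else pv s p hs v₀ (2 * j.val + 1) with hpick
      have hpick_spec : ∀ j : Fin (p / 2), ∃ i, (i = 2 * j.val ∨ i = 2 * j.val + 1) ∧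
          pick j = pv s p hs v₀ i ∧ pick j ∈ D := by
        intro j
        have hpj : pick j = if pv s p hs v₀ (2 * j.val) ∈ D then pv s p hs v₀ (2 * j.val)
            else pv s p hs v₀ (2 * j.val + 1) := rfl
        by_cases hmem : pv s p hs v₀ (2 * j.val) ∈ D
        · rw [hpj, if_pos hmem]
          exact ⟨2 * j.val, Or.inl rfl, rfl, hmem⟩
        · rw [hpj, if_neg hmem]
          refine ⟨2 * j.val + 1, Or.inr rfl, rfl, ?_⟩
          rcases dynamo_forced hD (pv_adj G s p hs v₀ j.val (hlt j))
            (pv_tau G s p hs v₀ _ (by have := hlt j; omega))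
            (pv_tau G s p hs v₀ _ (hlt j)) with h | h
          · exact absurd h hmem
          · exact h
      have := Finset.card_univ (α := Fin (p / 2))
      rw [← Fintype.card_fin (p / 2), ← Finset.card_univ]
      apply Finset.card_le_card_of_injOn pick
      · intro j _
        obtain ⟨i, hi, hpv, hmem⟩ := hpick_spec j
        simp only [Finset.mem_coe, hS2, Finset.mem_filter]
        refine ⟨hmem, ?_⟩
        intro a
        rw [hpv]
        rcases Nat.eq_zero_or_pos i with h0 | h0
        · subst h0; rw [pv_zero]; simp
        · rw [pv_succ s p hs v₀ i (by omega) (by have := hlt j; omega)]; simp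
      · intro j1 _ j2 _ h
        obtain ⟨i1, hi1, hpv1, -⟩ := hpick_spec j1
        obtain ⟨i2, hi2, hpv2, -⟩ := hpick_spec j2
        rw [hpv1, hpv2] at h
        have := pv_inj s p hs v₀ i1 i2 (by have := hlt j1; omega) (by have := hlt j2; omega) h
        apply Fin.ext
        omega
    have hdisj : Disjoint S1 S2 := by
      rw [Finset.disjoint_left]
      intro x hx1 hx2
      rw [hS1, Finset.mem_filter] at hx1
      rw [hS2, Finset.mem_filter] at hx2
      obtain ⟨a, rfl⟩ := hx1.2
      exact hx2.2 a rfl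
    calc C.card + p / 2 ≤ S1.card + S2.card := Nat.add_le_add hCS1 hS2card
      _ = (S1 ∪ S2).card := (Finset.card_union_of_disjoint hdisj).symm
      _ ≤ D.card := Finset.card_le_card (Finset.union_subset
          (Finset.filter_subset _ _) (Finset.filter_subset _ _))

end Lower

/-- dyn_τ(H) = β(G) + ⌊p/2⌋, where β(G) is the minimum size of a vertex
cover of G. -/
theorem stmt13 {V : Type*} [Fintype V] [DecidableEq V] (G : SimpleGraph V)
    (s p : ℕ) (hs : 2 ≤ s) (hp : 1 ≤ p) (v₀ : V) :
    dynMin (Hgraph G s p v₀) (tauH G s p v₀) =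
      sInf {n | ∃ C : Finset V, (∀ u v : V, G.Adj u v → u ∈ C ∨ v ∈ C) ∧ C.card = n}
        + p / 2 := by
  classical
  set β := sInf {n | ∃ C : Finset V, (∀ u v : V, G.Adj u v → u ∈ C ∨ v ∈ C) ∧ C.card = n}
    with hβ
  have hcovne : {n | ∃ C : Finset V, (∀ u v : V, G.Adj u v → u ∈ C ∨ v ∈ C) ∧
      C.card = n}.Nonempty :=
    ⟨(univ : Finset V).card, univ, fun u v _ => Or.inl (Finset.mem_univ u), rfl⟩
  obtain ⟨C, hC, hCcard⟩ := Nat.sInf_mem hcovne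
  obtain ⟨D, hDdyn, hDcard⟩ := upper_bound G s p v₀ C hC
  rw [dynMin]
  apply le_antisymm
  · exact Nat.sInf_le ⟨D, hDdyn, by rw [hDcard, hCcard]⟩
  · have hne2 : {n | ∃ D0 : Finset (V ⊕ (V × Fin s) ⊕ Fin (p - 1)),
        IsDynamo (Hgraph G s p v₀) (tauH G s p v₀) D0 ∧ D0.card = n}.Nonempty :=
      ⟨D.card, D, hDdyn, rfl⟩
    apply le_csInf hne2
    rintro n ⟨D', hD', rfl⟩
    obtain ⟨C', hC', hle⟩ := lower_bound G s p hs hp v₀ D' hD'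
    have : β ≤ C'.card := Nat.sInf_le ⟨C', hC', rfl⟩
    omega
end
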